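/- arXiv:math/0010273 — 6 statements merged into one kernel-verified Lean document; each statement's English description precedes it below -/
import Mathlib

section
/- Let u : ℝ → ℂ be infinitely differentiable at every point of (0,1]. For k ∈ ℕ define the operator D_k by (D_k f)(t) = t·f′(t) − k·f(t), and let P_q = D_0^1 ∘ D_1^2 ∘ ⋯ ∘ D_q^{q+1} (iterated composition; the operators D_k mutually commute on smooth functions), and let E f(t) = t·f′(t). Assume: for every m ∈ ℕ there exists q ∈ ℕ such that for every j ∈ ℕ and every δ ∈ (0,1) there is a constant C > 0 with ‖(E^j (P_q u))(t)‖ ≤ C·t^{m−δ} for all t ∈ (0,1]. Then there exist complex coefficients a_{k,l} (for k ∈ ℕ, 0 ≤ l ≤ k) such that for every q ∈ ℕ and every δ ∈ (0,1) there is C > 0 with ‖u(t) − ∑_{k=0}^{q−1} ∑_{l=0}^{k} a_{k,l} · t^k · (log t)^l‖ ≤ C·t^{q−δ} for all t ∈ (0,1]. -/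
/-- The operator `D_k : f ↦ (t ↦ t·f′(t) − k·f(t))`. -/
noncomputable def Dop (k : ℕ) (f : ℝ → ℂ) : ℝ → ℂ :=
  fun t => (t : ℂ) * deriv f t - (k : ℂ) * f t

/-- The radial derivative `E : f ↦ (t ↦ t·f′(t))`. -/
noncomputable def Eop (f : ℝ → ℂ) : ℝ → ℂ :=
  fun t => (t : ℂ) * deriv f t

/-- `P_q = D_0^1 ∘ D_1^2 ∘ ⋯ ∘ D_q^{q+1}` (the `D_k` mutually commute on smooth
functions, so the order of composition is immaterial). -/
noncomputable def Pop : ℕ → (ℝ → ℂ) → ℝ → ℂ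
  | 0 => Dop 0
  | q + 1 => fun f => (Dop (q + 1))^[q + 2] (Pop q f)

open Real Set Filter MeasureTheory intervalIntegral

noncomputable def ee (i l : ℕ) (t : ℝ) : ℂ := (t:ℂ)^i * (Real.log t : ℂ)^l

noncomputable def SS (b : ℕ → ℕ → ℂ) (n : ℕ) (t : ℝ) : ℂ :=
  ∑ i ∈ Finset.range n, ∑ l ∈ Finset.range (i+1), b i l * ee i l t

def Rem (f : ℝ → ℂ) (α : ℝ) : Prop :=
  ∃ C > (0:ℝ), ∀ t ∈ Ioc (0:ℝ) 1, ‖f t‖ ≤ C * t ^ α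

lemma ContDiffAt.derivC {f : ℝ → ℂ} {t : ℝ} (hf : ContDiffAt ℝ (⊤:ℕ∞) f t) :
    ContDiffAt ℝ (⊤:ℕ∞) (deriv f) t := by
  have h1 : ContDiffAt ℝ (⊤:ℕ∞) (fderiv ℝ f) t := hf.fderiv_right (by simp)
  have h2 : ContDiffAt ℝ (⊤:ℕ∞) (fun x => fderiv ℝ f x 1) t :=
    h1.clm_apply contDiffAt_const
  have : (fun x => fderiv ℝ f x 1) = deriv f := by
    funext x; exact fderiv_apply_one_eq_deriv
  rwa [this] at h2

lemma contDiffAt_ofReal {t : ℝ} : ContDiffAt ℝ (⊤:ℕ∞) (fun s:ℝ => (s:ℂ)) t :=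
  Complex.ofRealCLM.contDiff.contDiffAt

lemma contDiffAt_Dop {f : ℝ → ℂ} {t : ℝ} (k : ℕ) (hf : ContDiffAt ℝ (⊤:ℕ∞) f t) :
    ContDiffAt ℝ (⊤:ℕ∞) (Dop k f) t :=
  (contDiffAt_ofReal.mul hf.derivC).sub (contDiffAt_const.mul hf)

lemma contDiffAt_Dop_iter {f : ℝ → ℂ} {t : ℝ} (k c : ℕ) (hf : ContDiffAt ℝ (⊤:ℕ∞) f t) :
    ContDiffAt ℝ (⊤:ℕ∞) ((Dop k)^[c] f) t := by
  induction c generalizing f with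
  | zero => exact hf
  | succ c ih =>
    rw [Function.iterate_succ_apply]
    exact ih (contDiffAt_Dop k hf)

lemma hasDerivAt_ee {i l : ℕ} {t : ℝ} (ht : 0 < t) :
    HasDerivAt (ee i l) (((i:ℂ) * ee i l t + (l:ℂ) * ee i (l-1) t) / t) t := by
  have h1 : HasDerivAt (fun s:ℝ => (s:ℂ)) 1 t := by
    exact Complex.ofRealCLM.hasDerivAt (x := t)
  have h2 : HasDerivAt (fun s:ℝ => ((Real.log s : ℝ):ℂ)) ((t⁻¹ : ℝ):ℂ) t :=
    (Real.hasDerivAt_log ht.ne').ofReal_comp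
  have hp1 : HasDerivAt (fun s:ℝ => (s:ℂ)^i) ((i:ℂ) * (t:ℂ)^(i-1) * 1) t :=
    (hasDerivAt_pow i ((t:ℝ):ℂ)).comp t h1
  have hp2 : HasDerivAt (fun s:ℝ => ((Real.log s:ℝ):ℂ)^l)
      ((l:ℂ) * ((Real.log t:ℝ):ℂ)^(l-1) * ((t⁻¹:ℝ):ℂ)) t :=
    (hasDerivAt_pow l ((Real.log t:ℝ):ℂ)).comp t h2
  have h3 := hp1.mul hp2
  have htC : (t:ℂ) ≠ 0 := by exact_mod_cast ht.ne'
  convert h3 using 1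
  · rfl
  · rfl
  rw [div_eq_iff htC]
  simp only [ee, mul_one]
  push_cast
  cases i <;> cases l <;>
    · simp only [pow_succ, Nat.cast_zero, Nat.cast_add, Nat.cast_one, Nat.add_sub_cancel,
        pow_zero, Nat.zero_sub, Nat.sub_self]
      field_simp
      try ring

lemma hasDerivAt_SS (b : ℕ → ℕ → ℂ) (n : ℕ) {t : ℝ} (ht : 0 < t) :
    HasDerivAt (SS b n) (∑ i ∈ Finset.range n, ∑ l ∈ Finset.range (i+1),
      b i l * (((i:ℂ) * ee i l t + (l:ℂ) * ee i (l-1) t) / t)) t := by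
  have : SS b n = fun t => ∑ i ∈ Finset.range n, ∑ l ∈ Finset.range (i+1), b i l * ee i l t := rfl
  rw [this]
  apply HasDerivAt.fun_sum
  intro i _
  apply HasDerivAt.fun_sum
  intro l _
  exact (hasDerivAt_ee ht).const_mul (b i l)

lemma reindex_inner (b : ℕ → ℕ → ℂ) (i : ℕ) (hb : b i (i+1) = 0) (t : ℝ) :
    ∑ l ∈ Finset.range (i+1), b i l * ((l:ℂ) * ee i (l-1) t)
      = ∑ l ∈ Finset.range (i+1), ((l:ℂ)+1) * b i (l+1) * ee i l t := by
  rw [Finset.sum_range_succ' (fun l => b i l * ((l:ℂ) * ee i (l-1) t)) i]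
  rw [Finset.sum_range_succ]
  simp only [Nat.cast_zero, zero_mul, mul_zero, add_zero, hb, mul_zero, zero_mul, add_zero]
  apply Finset.sum_congr rfl
  intro l _
  simp only [Nat.add_sub_cancel]
  push_cast
  ring

lemma Dop_SS {b : ℕ → ℕ → ℂ} {n k : ℕ} (hb : ∀ i l, i < l → b i l = 0) {t : ℝ} (ht : 0 < t) :
    Dop k (SS b n) t
      = SS (fun i l => ((i:ℂ)-(k:ℂ)) * b i l + ((l:ℂ)+1) * b i (l+1)) n t := by
  have htC : (t:ℂ) ≠ 0 := by exact_mod_cast ht.ne'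
  have hd := (hasDerivAt_SS b n ht).deriv
  show (t:ℂ) * deriv (SS b n) t - (k:ℂ) * SS b n t = _
  rw [hd]
  unfold SS
  rw [Finset.mul_sum, Finset.mul_sum, ← Finset.sum_sub_distrib]
  apply Finset.sum_congr rfl
  intro i _
  rw [Finset.mul_sum, Finset.mul_sum, ← Finset.sum_sub_distrib]
  have key : ∀ l ∈ Finset.range (i+1),
      (t:ℂ) * (b i l * (((i:ℂ) * ee i l t + (l:ℂ) * ee i (l-1) t) / t))
        - (k:ℂ) * (b i l * ee i l t)
      = (((i:ℂ)-(k:ℂ)) * b i l) * ee i l t + b i l * ((l:ℂ) * ee i (l-1) t) := by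
    intro l _
    rw [mul_comm ((t:ℂ)) _, mul_assoc, div_mul_cancel₀ _ htC]
    ring
  rw [Finset.sum_congr rfl key, Finset.sum_add_distrib,
    reindex_inner b i (hb i (i+1) (by omega)) t]
  rw [← Finset.sum_add_distrib]
  apply Finset.sum_congr rfl
  intro l _
  ring

noncomputable def triAux (d : ℂ) (bi : ℕ → ℂ) (i : ℕ) (l : ℕ) : ℂ :=
  if i < l then 0 else (bi l - ((l:ℂ)+1) * triAux d bi i (l+1)) / d
termination_by i + 1 - l
decreasing_by omega

lemma triAux_of_gt {d bi i l} (h : i < l) : triAux d bi i l = 0 := by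
  rw [triAux]; simp [h]

lemma triAux_of_le {d bi i l} (h : l ≤ i) :
    triAux d bi i l = (bi l - ((l:ℂ)+1) * triAux d bi i (l+1)) / d := by
  rw [triAux]; simp [Nat.not_lt.mpr h]

noncomputable def solveC (k : ℕ) (b : ℕ → ℕ → ℂ) : ℕ → ℕ → ℂ := fun i l =>
  if i < k then 0
  else if i = k then (if l = 0 then 0 else b k (l-1) / (l:ℂ))
  else triAux ((i:ℂ)-(k:ℂ)) (b i) i l

lemma solveC_norm {k : ℕ} {b : ℕ → ℕ → ℂ} (hb : ∀ i l, i < l → b i l = 0)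
    (hkk : b k k = 0) : ∀ i l, i < l → solveC k b i l = 0 := by
  intro i l hil
  unfold solveC
  by_cases h1 : i < k
  · simp [h1]
  by_cases h2 : i = k
  · subst h2
    simp only [h1, if_false, if_pos rfl, if_true, reduceIte]
    have : l ≠ 0 := by omega
    simp only [this, if_false]
    rcases Nat.lt_or_ge i (l-1) with h | h
    · rw [hb i (l-1) h, zero_div]
    · have : l - 1 = i := by omega
      rw [this, hkk, zero_div]
  · simp only [h1, if_false, h2, if_false]
    exact triAux_of_gt hil

lemma solveC_low {k : ℕ} (b : ℕ → ℕ → ℂ) : ∀ i l, i < k → solveC k b i l = 0 := by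
  intro i l h; unfold solveC; simp [h]

lemma solveC_at_k {k : ℕ} (b : ℕ → ℕ → ℂ) (l : ℕ) (hl : 1 ≤ l) :
    solveC k b k l = b k (l-1) / (l:ℂ) := by
  unfold solveC
  rw [if_neg (Nat.lt_irrefl k), if_pos rfl, if_neg (by omega : ¬ l = 0)]

lemma solveC_of_gt {k : ℕ} (b : ℕ → ℕ → ℂ) {i : ℕ} (h : k < i) (l : ℕ) :
    solveC k b i l = triAux ((i:ℂ)-(k:ℂ)) (b i) i l := by
  unfold solveC
  rw [if_neg (Nat.lt_asymm h), if_neg (by omega : ¬ i = k)]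

lemma solveC_spec (k n : ℕ) (b : ℕ → ℕ → ℂ) (hb : ∀ i l, i < l → b i l = 0)
    (hlow : ∀ i l, i < k → b i l = 0) (hkk : b k k = 0) {t : ℝ} (ht : 0 < t) :
    Dop k (SS (solveC k b) n) t = SS b n t := by
  rw [Dop_SS (solveC_norm hb hkk) ht]
  unfold SS
  apply Finset.sum_congr rfl
  intro i _
  apply Finset.sum_congr rfl
  intro l hl
  have hli : l ≤ i := Nat.lt_succ_iff.mp (Finset.mem_range.mp hl)
  congr 1
  show ((i:ℂ) - (k:ℂ)) * solveC k b i l + ((l:ℂ) + 1) * solveC k b i (l+1) = b i l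
  rcases Nat.lt_trichotomy i k with h | h | h
  · rw [solveC_low b i l h, solveC_low b i (l+1) h, hlow i l h]; ring
  · subst h
    rw [solveC_at_k b (l+1) (by omega)]
    have h1 : ((l:ℂ)+1) ≠ 0 := Nat.cast_add_one_ne_zero l
    simp only [Nat.add_sub_cancel, sub_self, zero_mul, zero_add]
    push_cast
    field_simp
  · have hd : ((i:ℂ)-(k:ℂ)) ≠ 0 := by
      have : (i:ℂ) ≠ (k:ℂ) := by exact_mod_cast (by omega : i ≠ k)
      exact sub_ne_zero.mpr this
    rw [solveC_of_gt b h l, solveC_of_gt b h (l+1), triAux_of_le hli]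
    push_cast
    field_simp
    ring

lemma hasDerivAt_quot {f : ℝ → ℂ} {k : ℕ} {s : ℝ} (hf : DifferentiableAt ℝ f s)
    (hs : 0 < s) :
    HasDerivAt (fun x : ℝ => f x / (x:ℂ)^k) (Dop k f s / (s:ℂ)^(k+1)) s := by
  have hsC : (s:ℂ) ≠ 0 := by exact_mod_cast hs.ne'
  have h1 : HasDerivAt (fun x:ℝ => (x:ℂ)) 1 s := by
    exact Complex.ofRealCLM.hasDerivAt (x := s)
  have hp : HasDerivAt (fun x:ℝ => (x:ℂ)^k) ((k:ℂ) * (s:ℂ)^(k-1) * 1) s :=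
    (hasDerivAt_pow k ((s:ℝ):ℂ)).comp s h1
  have h := hf.hasDerivAt.div hp (pow_ne_zero k hsC)
  convert h using 1
  · rfl
  · rfl
  show Dop k f s / (s:ℂ)^(k+1) = _
  rw [Dop]
  cases k with
  | zero => simp [hsC]
  | succ k =>
    simp only [Nat.add_sub_cancel, mul_one]
    field_simp
    ring

lemma norm_cpow (s : ℝ) (k : ℕ) : ‖((s:ℝ):ℂ)^k‖ = |s|^k := by
  rw [norm_pow, Complex.norm_real, Real.norm_eq_abs]

lemma integrand_bound {g : ℝ → ℂ} {C α : ℝ} {k : ℕ} {s : ℝ} (hs : 0 < s)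
    (hb : ‖g s‖ ≤ C * s ^ α) :
    ‖g s / (s:ℂ)^(k+1)‖ ≤ C * s ^ (α - ((k:ℝ)+1)) := by
  rw [norm_div, norm_cpow, abs_of_pos hs]
  have h1 : (0:ℝ) < s ^ (k+1) := pow_pos hs _
  rw [div_le_iff₀ h1]
  calc ‖g s‖ ≤ C * s ^ α := hb
    _ = C * s ^ (α - ((k:ℝ)+1)) * s ^ (k+1) := by
        rw [mul_assoc]
        congr 1
        rw [← Real.rpow_natCast s (k+1), ← Real.rpow_add hs]
        push_cast
        ring_nf

lemma rpow_mul_pow {t : ℝ} (ht : 0 < t) (α : ℝ) (k : ℕ) :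
    t ^ (α - (k:ℝ)) * t ^ k = t ^ α := by
  rw [← Real.rpow_natCast t k, ← Real.rpow_add ht, sub_add_cancel]

lemma smooth_one_le : ((⊤:ℕ∞) : WithTop ℕ∞) ≠ 0 := by
  simp

lemma ode_bound_low {k : ℕ} {α : ℝ} (hα : α < k) {f : ℝ → ℂ}
    (hf : ∀ t ∈ Ioc (0:ℝ) 1, ContDiffAt ℝ (⊤:ℕ∞) f t)
    (hb : Rem (Dop k f) α) : Rem f α := by
  obtain ⟨C, hC, hCb⟩ := hb
  have hka : (0:ℝ) < (k:ℝ) - α := by linarith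
  set F : ℝ → ℂ := fun x => f x / (x:ℂ)^k with hF
  set G : ℝ → ℂ := fun s => Dop k f s / (s:ℂ)^(k+1) with hG
  have hGc : ∀ s ∈ Ioc (0:ℝ) 1, ContinuousAt G s := by
    intro s hs
    apply ContinuousAt.div
    · exact (contDiffAt_Dop k (hf s hs)).continuousAt
    · exact (contDiffAt_ofReal.continuousAt).pow (k+1)
    · exact pow_ne_zero _ (by exact_mod_cast hs.1.ne')
  refine ⟨‖F 1‖ + C / ((k:ℝ) - α), by positivity, ?_⟩
  intro t ht
  obtain ⟨ht0, ht1⟩ := ht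
  have hsub : Icc t 1 ⊆ Ioc (0:ℝ) 1 := fun x hx => ⟨lt_of_lt_of_le ht0 hx.1, hx.2⟩
  have hftc : ∫ s in t..(1:ℝ), G s = F 1 - F t := by
    apply intervalIntegral.integral_eq_sub_of_hasDerivAt
    · intro x hx
      rw [uIcc_of_le ht1] at hx
      exact hasDerivAt_quot ((hf x (hsub hx)).differentiableAt smooth_one_le)
        (lt_of_lt_of_le ht0 hx.1)
    · apply ContinuousOn.intervalIntegrable
      rw [uIcc_of_le ht1]
      exact fun x hx => (hGc x (hsub hx)).continuousWithinAt
  have hbound : ‖∫ s in t..(1:ℝ), G s‖ ≤ C / ((k:ℝ) - α) * t ^ (α - (k:ℝ)) := by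
    have h1 : ‖∫ s in t..(1:ℝ), G s‖ ≤ |∫ s in t..(1:ℝ), C * s ^ (α - ((k:ℝ)+1))| := by
      apply intervalIntegral.norm_integral_le_abs_of_norm_le
      · rw [uIoc_of_le ht1]
        filter_upwards [MeasureTheory.ae_restrict_mem measurableSet_Ioc] with s hs
        exact integrand_bound (lt_trans ht0 hs.1) (hCb s ⟨lt_trans ht0 hs.1, hs.2⟩)
      · apply IntervalIntegrable.const_mul
        apply ContinuousOn.intervalIntegrable
        intro x hx
        rw [uIcc_of_le ht1] at hx
        exact (Real.continuousAt_rpow_const x _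
          (Or.inl (lt_of_lt_of_le ht0 hx.1).ne')).continuousWithinAt
    have h2 : ∫ s in t..(1:ℝ), C * s ^ (α - ((k:ℝ)+1))
        = C * ((t ^ (α - (k:ℝ)) - 1) / ((k:ℝ) - α)) := by
      rw [intervalIntegral.integral_const_mul, integral_rpow]
      · have he : α - ((k:ℝ)+1) + 1 = α - k := by ring
        rw [he, Real.one_rpow]
        congr 1
        rw [div_eq_div_iff (by linarith) (by linarith)]
        ring
      · right
        refine ⟨by intro hcon; apply absurd hα; simp; linarith, ?_⟩
        rw [uIcc_of_le ht1]
        intro hcon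
        exact absurd hcon.1 (not_le.mpr ht0)
    rw [h2] at h1
    have htk : (1:ℝ) ≤ t ^ (α - (k:ℝ)) :=
      Real.one_le_rpow_of_pos_of_le_one_of_nonpos ht0 ht1 (by linarith)
    calc ‖∫ s in t..(1:ℝ), G s‖
        ≤ |C * ((t ^ (α - (k:ℝ)) - 1) / ((k:ℝ) - α))| := h1
      _ = C * ((t ^ (α - (k:ℝ)) - 1) / ((k:ℝ) - α)) := by
          rw [abs_of_nonneg]
          exact mul_nonneg hC.le (div_nonneg (by linarith) hka.le)
      _ ≤ C * (t ^ (α - (k:ℝ)) / ((k:ℝ) - α)) := by gcongr; linarith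
      _ = C / ((k:ℝ) - α) * t ^ (α - (k:ℝ)) := by ring
  have hFt : ‖F t‖ ≤ ‖F 1‖ + C / ((k:ℝ) - α) * t ^ (α - (k:ℝ)) := by
    have : F t = F 1 - ∫ s in t..(1:ℝ), G s := by rw [hftc]; ring
    rw [this]
    calc ‖F 1 - ∫ s in t..(1:ℝ), G s‖ ≤ ‖F 1‖ + ‖∫ s in t..(1:ℝ), G s‖ := norm_sub_le _ _
      _ ≤ _ := by linarith
  have htC : (t:ℂ) ≠ 0 := by exact_mod_cast ht0.ne'
  have hft : f t = F t * (t:ℂ)^k := by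
    rw [hF]
    field_simp
  rw [hft, norm_mul, norm_cpow, abs_of_pos ht0]
  have htk : (1:ℝ) ≤ t ^ (α - (k:ℝ)) :=
    Real.one_le_rpow_of_pos_of_le_one_of_nonpos ht0 ht1 (by linarith)
  have hstep : ‖F t‖ ≤ (‖F 1‖ + C / ((k:ℝ) - α)) * t ^ (α - (k:ℝ)) := by
    have h3 : C / ((k:ℝ) - α) * t ^ (α - (k:ℝ)) ≥ 0 := by positivity
    nlinarith [norm_nonneg (F 1), div_pos hC hka]
  calc ‖F t‖ * t ^ k ≤ (‖F 1‖ + C / ((k:ℝ) - α)) * t ^ (α - (k:ℝ)) * t ^ k := by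
        apply mul_le_mul_of_nonneg_right hstep (pow_nonneg ht0.le k)
    _ = (‖F 1‖ + C / ((k:ℝ) - α)) * t ^ α := by
        rw [mul_assoc, rpow_mul_pow ht0]

lemma ode_bound_high {k : ℕ} {α : ℝ} (hα : (k:ℝ) < α) {f : ℝ → ℂ}
    (hf : ∀ t ∈ Ioc (0:ℝ) 1, ContDiffAt ℝ (⊤:ℕ∞) f t)
    (hb : Rem (Dop k f) α) :
    ∃ c : ℂ, Rem (fun t => f t - c * (t:ℂ)^k) α := by
  obtain ⟨C, hC, hCb⟩ := hb
  have hak : (0:ℝ) < α - (k:ℝ) := by linarith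
  set F : ℝ → ℂ := fun x => f x / (x:ℂ)^k with hF
  set G : ℝ → ℂ := fun s => Dop k f s / (s:ℂ)^(k+1) with hG
  have hGc : ∀ s ∈ Ioc (0:ℝ) 1, ContinuousAt G s := by
    intro s hs
    apply ContinuousAt.div
    · exact (contDiffAt_Dop k (hf s hs)).continuousAt
    · exact (contDiffAt_ofReal.continuousAt).pow (k+1)
    · exact pow_ne_zero _ (by exact_mod_cast hs.1.ne')
  -- integrability of G on Ioc 0 1
  have hdom : MeasureTheory.IntegrableOn (fun s : ℝ => C * s ^ (α - ((k:ℝ)+1))) (Ioc (0:ℝ) 1) := by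
    have h1 : IntervalIntegrable (fun s : ℝ => s ^ (α - ((k:ℝ)+1))) volume 0 1 :=
      intervalIntegral.intervalIntegrable_rpow' (by linarith)
    have h2 := (h1.const_mul C)
    rwa [intervalIntegrable_iff_integrableOn_Ioc_of_le zero_le_one] at h2
  have hGint : MeasureTheory.IntegrableOn G (Ioc (0:ℝ) 1) := by
    apply MeasureTheory.Integrable.mono' hdom
    · exact (continuousOn_of_forall_continuousAt (fun x hx => hGc x hx)).aestronglyMeasurable
        measurableSet_Ioc
    · filter_upwards [MeasureTheory.ae_restrict_mem measurableSet_Ioc] with s hs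
      exact integrand_bound hs.1 (hCb s hs)
  have hint : ∀ a b : ℝ, 0 ≤ a → a ≤ b → b ≤ 1 → IntervalIntegrable G volume a b := by
    intro a b ha hab hb1
    rw [intervalIntegrable_iff_integrableOn_Ioc_of_le hab]
    exact hGint.mono_set (fun x hx => ⟨lt_of_le_of_lt ha hx.1, le_trans hx.2 hb1⟩)
  -- FTC on [t,1]
  have hftc : ∀ t ∈ Ioc (0:ℝ) 1, ∫ s in t..(1:ℝ), G s = F 1 - F t := by
    intro t ht
    apply intervalIntegral.integral_eq_sub_of_hasDerivAt
    · intro x hx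
      rw [uIcc_of_le ht.2] at hx
      exact hasDerivAt_quot ((hf x ⟨lt_of_lt_of_le ht.1 hx.1, hx.2⟩).differentiableAt
        smooth_one_le) (lt_of_lt_of_le ht.1 hx.1)
    · exact hint t 1 ht.1.le ht.2 le_rfl
  set I : ℂ := ∫ s in (0:ℝ)..1, G s with hI
  refine ⟨F 1 - I, C / (α - (k:ℝ)), div_pos hC hak, ?_⟩
  intro t ht
  obtain ⟨ht0, ht1⟩ := ht
  have hsplit : (∫ s in (0:ℝ)..t, G s) + ∫ s in t..(1:ℝ), G s = I :=
    intervalIntegral.integral_add_adjacent_intervals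
      (hint 0 t le_rfl ht0.le ht1) (hint t 1 ht0.le ht1 le_rfl)
  have hrep : f t - (F 1 - I) * (t:ℂ)^k = (∫ s in (0:ℝ)..t, G s) * (t:ℂ)^k := by
    have h1 : (∫ s in (0:ℝ)..t, G s) = I - (F 1 - F t) := by
      rw [← hftc t ⟨ht0, ht1⟩] at *
      linear_combination hsplit
    rw [h1]
    have htC : (t:ℂ) ≠ 0 := by exact_mod_cast ht0.ne'
    have hft : f t = F t * (t:ℂ)^k := by rw [hF]; field_simp
    rw [hft]
    ring
  show ‖f t - (F 1 - I) * (t:ℂ)^k‖ ≤ _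
  rw [hrep, norm_mul, norm_cpow, abs_of_pos ht0]
  have hbnd : ‖∫ s in (0:ℝ)..t, G s‖ ≤ C / (α - (k:ℝ)) * t ^ (α - (k:ℝ)) := by
    have h1 : ‖∫ s in (0:ℝ)..t, G s‖ ≤ |∫ s in (0:ℝ)..t, C * s ^ (α - ((k:ℝ)+1))| := by
      apply intervalIntegral.norm_integral_le_abs_of_norm_le
      · rw [uIoc_of_le ht0.le]
        filter_upwards [MeasureTheory.ae_restrict_mem measurableSet_Ioc] with s hs
        exact integrand_bound hs.1 (hCb s ⟨hs.1, le_trans hs.2 ht1⟩)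
      · apply IntervalIntegrable.const_mul
        exact intervalIntegral.intervalIntegrable_rpow' (by linarith)
    have h2 : ∫ s in (0:ℝ)..t, C * s ^ (α - ((k:ℝ)+1))
        = C / (α - (k:ℝ)) * t ^ (α - (k:ℝ)) := by
      rw [intervalIntegral.integral_const_mul, integral_rpow (Or.inl (by linarith))]
      have he : α - ((k:ℝ)+1) + 1 = α - k := by ring
      rw [he, Real.zero_rpow hak.ne']
      ring
    rw [h2] at h1
    calc ‖∫ s in (0:ℝ)..t, G s‖ ≤ |C / (α - (k:ℝ)) * t ^ (α - (k:ℝ))| := h1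
      _ = C / (α - (k:ℝ)) * t ^ (α - (k:ℝ)) := abs_of_nonneg (by positivity)
  calc ‖∫ s in (0:ℝ)..t, G s‖ * t ^ k
      ≤ C / (α - (k:ℝ)) * t ^ (α - (k:ℝ)) * t ^ k := by
        apply mul_le_mul_of_nonneg_right hbnd (pow_nonneg ht0.le k)
    _ = C / (α - (k:ℝ)) * t ^ α := by rw [mul_assoc, rpow_mul_pow ht0]

lemma Rem.congr {f g : ℝ → ℂ} {α : ℝ} (h : ∀ t ∈ Ioc (0:ℝ) 1, f t = g t) (hf : Rem f α) :
    Rem g α := by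
  obtain ⟨C, hC, hb⟩ := hf
  exact ⟨C, hC, fun t ht => by rw [← h t ht]; exact hb t ht⟩

lemma Rem.add {f g : ℝ → ℂ} {α : ℝ} (hf : Rem f α) (hg : Rem g α) :
    Rem (fun t => f t + g t) α := by
  obtain ⟨C, hC, hb⟩ := hf
  obtain ⟨D, hD, hd⟩ := hg
  refine ⟨C + D, by positivity, fun t ht => ?_⟩
  calc ‖f t + g t‖ ≤ ‖f t‖ + ‖g t‖ := norm_add_le _ _
    _ ≤ C * t ^ α + D * t ^ α := add_le_add (hb t ht) (hd t ht)
    _ = (C + D) * t ^ α := by ring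

lemma Rem.sub {f g : ℝ → ℂ} {α : ℝ} (hf : Rem f α) (hg : Rem g α) :
    Rem (fun t => f t - g t) α := by
  have hng : Rem (fun t => -(g t)) α := by
    obtain ⟨D, hD, hd⟩ := hg
    exact ⟨D, hD, fun t ht => by rw [norm_neg]; exact hd t ht⟩
  exact (hf.add hng).congr (fun t _ => by ring) |>.congr (fun t _ => rfl)

lemma Rem.const_mul {f : ℝ → ℂ} {α : ℝ} (c : ℂ) (hf : Rem f α) :
    Rem (fun t => c * f t) α := by
  obtain ⟨C, hC, hb⟩ := hf
  refine ⟨(‖c‖ + 1) * C, by positivity, fun t ht => ?_⟩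
  rw [norm_mul]
  calc ‖c‖ * ‖f t‖ ≤ (‖c‖ + 1) * ‖f t‖ := by
        apply mul_le_mul_of_nonneg_right (by linarith) (norm_nonneg _)
    _ ≤ (‖c‖ + 1) * (C * t ^ α) := by
        apply mul_le_mul_of_nonneg_left (hb t ht) (by positivity)
    _ = (‖c‖ + 1) * C * t ^ α := by ring

lemma Rem.zero {α : ℝ} : Rem (fun _ => (0:ℂ)) α :=
  ⟨1, one_pos, fun t ht => by
    rw [norm_zero, one_mul]
    exact (Real.rpow_pos_of_pos ht.1 α).le⟩

lemma Rem.sum {ι : Type*} {s : Finset ι} {f : ι → ℝ → ℂ} {α : ℝ}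
    (h : ∀ i ∈ s, Rem (f i) α) : Rem (fun t => ∑ i ∈ s, f i t) α := by
  classical
  induction s using Finset.induction_on with
  | empty => exact Rem.zero.congr (fun t _ => by simp)
  | insert a s' hx ih =>
    have := (h a (Finset.mem_insert_self a s')).add
      (ih (fun i hi => h i (Finset.mem_insert_of_mem hi)))
    exact this.congr (fun t _ => by rw [Finset.sum_insert hx])

lemma Rem.exp_le {f : ℝ → ℂ} {α α' : ℝ} (hle : α' ≤ α) (hf : Rem f α) : Rem f α' := by
  obtain ⟨C, hC, hb⟩ := hf
  refine ⟨C, hC, fun t ht => ?_⟩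
  calc ‖f t‖ ≤ C * t ^ α := hb t ht
    _ ≤ C * t ^ α' := by
        apply mul_le_mul_of_nonneg_left _ hC.le
        exact Real.rpow_le_rpow_of_exponent_ge ht.1 ht.2 hle

lemma loglem (l : ℕ) {ε : ℝ} (hε : 0 < ε) :
    ∃ C > (0:ℝ), ∀ t ∈ Ioc (0:ℝ) 1, |Real.log t| ^ l ≤ C * t ^ (-ε) := by
  rcases Nat.eq_zero_or_pos l with hl | hl
  · subst hl
    refine ⟨1, one_pos, fun t ht => ?_⟩
    simp only [pow_zero, one_mul]
    exact Real.one_le_rpow_of_pos_of_le_one_of_nonpos ht.1 ht.2 (by linarith)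
  · set s : ℝ := ε / l with hs
    have hs0 : 0 < s := div_pos hε (by exact_mod_cast hl)
    refine ⟨(1/s)^l, by positivity, fun t ht => ?_⟩
    obtain ⟨ht0, ht1⟩ := ht
    have hlog : |Real.log t| = -Real.log t := abs_of_nonpos (Real.log_nonpos ht0.le ht1)
    have key : -Real.log t ≤ t ^ (-s) / s := by
      have h1 : Real.log (t ^ (-s)) ≤ t ^ (-s) - 1 :=
        Real.log_le_sub_one_of_pos (Real.rpow_pos_of_pos ht0 _)
      rw [Real.log_rpow ht0] at h1
      have h2 : (0:ℝ) < t ^ (-s) := Real.rpow_pos_of_pos ht0 _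
      rw [le_div_iff₀ hs0]
      nlinarith [h1, h2]
    calc |Real.log t| ^ l ≤ (t ^ (-s) / s) ^ l := by
          apply pow_le_pow_left₀ (abs_nonneg _) (by rw [hlog] at *; exact key)
      _ = (1/s)^l * (t ^ (-s))^l := by rw [div_pow, one_div_pow]; ring
      _ = (1/s)^l * t ^ (-ε) := by
          congr 1
          rw [← Real.rpow_natCast (t ^ (-s)) l, ← Real.rpow_mul ht0.le]
          have hl0 : (l:ℝ) ≠ 0 := Nat.cast_ne_zero.mpr hl.ne'
          congr 1
          rw [hs]
          field_simp
lemma norm_ee {i l : ℕ} {t : ℝ} (ht0 : 0 < t) :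
    ‖ee i l t‖ = t ^ i * |Real.log t| ^ l := by
  rw [ee, norm_mul, norm_cpow, abs_of_pos ht0, norm_pow, Complex.norm_real, Real.norm_eq_abs]

lemma ee_small {i l : ℕ} {α : ℝ} (hi : α < i) : Rem (ee i l) α := by
  obtain ⟨C, hC, hb⟩ := loglem l (by linarith : (0:ℝ) < (i:ℝ) - α)
  refine ⟨C, hC, fun t ht => ?_⟩
  rw [norm_ee ht.1]
  calc t ^ i * |Real.log t| ^ l ≤ t ^ i * (C * t ^ (-((i:ℝ) - α))) := by
        apply mul_le_mul_of_nonneg_left (hb t ht) (pow_nonneg ht.1.le i)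
    _ = C * t ^ α := by
        rw [← Real.rpow_natCast t i, mul_comm (t ^ ((i:ℕ):ℝ)) _, mul_assoc,
          ← Real.rpow_add ht.1]
        norm_num

lemma contDiffAt_ee {i l : ℕ} {t : ℝ} (ht : 0 < t) : ContDiffAt ℝ (⊤:ℕ∞) (ee i l) t := by
  have h1 : ContDiffAt ℝ (⊤:ℕ∞) (fun s:ℝ => (s:ℂ)^i) t := contDiffAt_ofReal.pow i
  have h2 : ContDiffAt ℝ (⊤:ℕ∞) (fun s:ℝ => ((Real.log s : ℝ):ℂ)^l) t := by
    apply ContDiffAt.pow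
    exact contDiffAt_ofReal.comp t (Real.contDiffAt_log.mpr ht.ne')
  exact h1.mul h2

lemma contDiffAt_SS {b : ℕ → ℕ → ℂ} {n : ℕ} {t : ℝ} (ht : 0 < t) :
    ContDiffAt ℝ (⊤:ℕ∞) (SS b n) t := by
  apply ContDiffAt.sum
  intro i _
  apply ContDiffAt.sum
  intro l _
  exact contDiffAt_const.mul (contDiffAt_ee ht)

lemma step1 {k n : ℕ} {α : ℝ} (hk : (k:ℝ) < α) (hkn : k < n) {f : ℝ → ℂ}
    (hf : ∀ t ∈ Ioc (0:ℝ) 1, ContDiffAt ℝ (⊤:ℕ∞) f t)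
    {b : ℕ → ℕ → ℂ} (hbnorm : ∀ i l, i < l → b i l = 0)
    (hblow : ∀ i l, i < k → b i l = 0) (hbkk : b k k = 0)
    {r : ℝ → ℂ} (hr : Rem r α)
    (heq : ∀ t ∈ Ioc (0:ℝ) 1, Dop k f t = SS b n t + r t) :
    ∃ b' : ℕ → ℕ → ℂ, ∃ r' : ℝ → ℂ,
      (∀ i l, i < l → b' i l = 0) ∧ (∀ i l, i < k → b' i l = 0) ∧
      (∀ l, 1 ≤ l → b' k l = b k (l-1) / (l:ℂ)) ∧ Rem r' α ∧
      (∀ t ∈ Ioc (0:ℝ) 1, f t = SS b' n t + r' t) := by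
  set b0 := solveC k b with hb0
  set hh : ℝ → ℂ := fun t => f t - SS b0 n t with hhh
  have hhsm : ∀ t ∈ Ioc (0:ℝ) 1, ContDiffAt ℝ (⊤:ℕ∞) hh t :=
    fun t ht => (hf t ht).sub (contDiffAt_SS ht.1)
  have hDh : ∀ t ∈ Ioc (0:ℝ) 1, Dop k hh t = r t := by
    intro t ht
    have hdf : DifferentiableAt ℝ f t := (hf t ht).differentiableAt smooth_one_le
    have hdS : DifferentiableAt ℝ (SS b0 n) t :=
      (contDiffAt_SS ht.1).differentiableAt smooth_one_le
    have : Dop k hh t = Dop k f t - Dop k (SS b0 n) t := by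
      show (t:ℂ) * deriv (fun t => f t - SS b0 n t) t - (k:ℂ) * (f t - SS b0 n t) = _
      rw [deriv_fun_sub hdf hdS]
      show _ = ((t:ℂ) * deriv f t - (k:ℂ) * f t) - ((t:ℂ) * deriv (SS b0 n) t - (k:ℂ) * SS b0 n t)
      ring
    rw [this, heq t ht, solveC_spec k n b hbnorm hblow hbkk ht.1]
    ring
  have hrDh : Rem (Dop k hh) α := hr.congr (fun t ht => (hDh t ht).symm)
  obtain ⟨c, hrem⟩ := ode_bound_high hk hhsm hrDh
  classical
  refine ⟨fun i l => if i = k ∧ l = 0 then c else b0 i l, fun t => hh t - c * (t:ℂ)^k,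
    ?_, ?_, ?_, hrem, ?_⟩
  · intro i l hil
    show (if i = k ∧ l = 0 then c else b0 i l) = 0
    have hcase : ¬ (i = k ∧ l = 0) := by rintro ⟨rfl, rfl⟩; omega
    rw [if_neg hcase]
    exact solveC_norm hbnorm hbkk i l hil
  · intro i l hik
    show (if i = k ∧ l = 0 then c else b0 i l) = 0
    have hcase : ¬ (i = k ∧ l = 0) := by rintro ⟨rfl, _⟩; omega
    rw [if_neg hcase]
    exact solveC_low b i l hik
  · intro l hl
    show (if k = k ∧ l = 0 then c else b0 k l) = b k (l-1) / (l:ℂ)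
    have hcase : ¬ (k = k ∧ l = 0) := by rintro ⟨_, rfl⟩; omega
    rw [if_neg hcase, hb0]
    exact solveC_at_k b l hl
  · intro t ht
    have hb00 : b0 k 0 = 0 := by
      rw [hb0]
      unfold solveC
      rw [if_neg (Nat.lt_irrefl k), if_pos rfl, if_pos rfl]
    have hsplit : SS (fun i l => if i = k ∧ l = 0 then c else b0 i l) n t
        = SS b0 n t + c * ee k 0 t := by
      unfold SS
      rw [← sub_eq_iff_eq_add']
      rw [← Finset.sum_sub_distrib]
      have hper : ∀ i ∈ Finset.range n,
          ((∑ l ∈ Finset.range (i+1), (if i = k ∧ l = 0 then c else b0 i l) * ee i l t)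
            - ∑ l ∈ Finset.range (i+1), b0 i l * ee i l t)
          = if i = k then c * ee k 0 t else 0 := by
        intro i _
        by_cases hik : i = k
        · subst hik
          rw [if_pos rfl, ← Finset.sum_sub_distrib]
          rw [Finset.sum_eq_single_of_mem 0 (Finset.mem_range.mpr (by omega))]
          · rw [if_pos ⟨rfl, rfl⟩, hb00]
            ring
          · intro l _ hl0
            rw [if_neg (by rintro ⟨_, rfl⟩; omega)]
            ring
        · rw [if_neg hik, ← Finset.sum_sub_distrib]
          apply Finset.sum_eq_zero
          intro l _
          rw [if_neg (by rintro ⟨rfl, _⟩; omega)]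
          ring
      rw [Finset.sum_congr rfl hper, Finset.sum_ite_eq' (Finset.range n) k
        (fun _ => c * ee k 0 t), if_pos (Finset.mem_range.mpr hkn)]
    rw [hsplit]
    have : ee k 0 t = (t:ℂ)^k := by rw [ee]; simp
    rw [this]
    show f t = SS b0 n t + c * (t:ℂ)^k + (hh t - c * (t:ℂ)^k)
    rw [hhh]
    ring

lemma peelN {k n : ℕ} {α : ℝ} (hk : (k:ℝ) < α) (hkn : k < n) :
    ∀ c d : ℕ, c + d ≤ k + 1 → ∀ f : ℝ → ℂ, (∀ t ∈ Ioc (0:ℝ) 1, ContDiffAt ℝ (⊤:ℕ∞) f t) →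
    ∀ b : ℕ → ℕ → ℂ, ∀ r : ℝ → ℂ, (∀ i l, i < l → b i l = 0) → (∀ i l, i < k → b i l = 0) →
    (∀ l, d ≤ l → b k l = 0) → Rem r α →
    (∀ t ∈ Ioc (0:ℝ) 1, (Dop k)^[c] f t = SS b n t + r t) →
    ∃ b' : ℕ → ℕ → ℂ, ∃ r' : ℝ → ℂ, (∀ i l, i < l → b' i l = 0) ∧
      (∀ i l, i < k → b' i l = 0) ∧ (∀ l, d + c ≤ l → b' k l = 0) ∧ Rem r' α ∧
      (∀ t ∈ Ioc (0:ℝ) 1, f t = SS b' n t + r' t) := by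
  intro c
  induction c with
  | zero =>
    intro d _ f hf b r hbn hbl hbk hr heq
    exact ⟨b, r, hbn, hbl, fun l hl => hbk l (by omega), hr, fun t ht => heq t ht⟩
  | succ c ih =>
    intro d hcd f hf b r hbn hbl hbk hr heq
    have heq' : ∀ t ∈ Ioc (0:ℝ) 1, (Dop k)^[c] (Dop k f) t = SS b n t + r t := by
      intro t ht
      rw [← Function.iterate_succ_apply]
      exact heq t ht
    obtain ⟨b1, r1, hb1n, hb1l, hb1k, hr1, heq1⟩ :=
      ih d (by omega) (Dop k f) (fun t ht => contDiffAt_Dop k (hf t ht)) b r hbn hbl hbk hr heq'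
    have hb1kk : b1 k k = 0 := hb1k k (by omega)
    obtain ⟨b2, r2, hb2n, hb2l, hb2k, hr2, heq2⟩ :=
      step1 hk hkn hf hb1n hb1l hb1kk hr1 heq1
    refine ⟨b2, r2, hb2n, hb2l, ?_, hr2, heq2⟩
    intro l hl
    rw [hb2k l (by omega), hb1k (l-1) (by omega), zero_div]

lemma step2N {k : ℕ} {α : ℝ} (hk : α < k) :
    ∀ c : ℕ, ∀ f : ℝ → ℂ, (∀ t ∈ Ioc (0:ℝ) 1, ContDiffAt ℝ (⊤:ℕ∞) f t) →
    Rem ((Dop k)^[c] f) α → Rem f α := by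
  intro c
  induction c with
  | zero => exact fun f _ h => h
  | succ c ih =>
    intro f hf h
    have h' : Rem ((Dop k)^[c] (Dop k f)) α := by
      apply h.congr
      intro t _
      rw [← Function.iterate_succ_apply]
    exact ode_bound_low hk hf (ih (Dop k f) (fun t ht => contDiffAt_Dop k (hf t ht)) h')

lemma levelPeel {k n : ℕ} {α : ℝ} (hkn : k < n) (hne : ∀ j : ℕ, (j:ℝ) ≠ α)
    {f : ℝ → ℂ} (hf : ∀ t ∈ Ioc (0:ℝ) 1, ContDiffAt ℝ (⊤:ℕ∞) f t)
    {b : ℕ → ℕ → ℂ} {r : ℝ → ℂ} (hbn : ∀ i l, i < l → b i l = 0)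
    (hbl : ∀ i l, i < k + 1 → b i l = 0) (hr : Rem r α)
    (heq : ∀ t ∈ Ioc (0:ℝ) 1, (Dop k)^[k+1] f t = SS b n t + r t) :
    ∃ b' : ℕ → ℕ → ℂ, ∃ r' : ℝ → ℂ, (∀ i l, i < l → b' i l = 0) ∧
      (∀ i l, i < k → b' i l = 0) ∧ Rem r' α ∧
      (∀ t ∈ Ioc (0:ℝ) 1, f t = SS b' n t + r' t) := by
  rcases lt_or_gt_of_ne (hne k) with hk | hk
  · obtain ⟨b', r', h1, h2, _, h4, h5⟩ :=
      peelN hk hkn (k+1) 0 (by omega) f hf b r hbn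
        (fun i l hil => hbl i l (by omega)) (fun l _ => hbl k l (by omega)) hr heq
    exact ⟨b', r', h1, h2, h4, h5⟩
  · have hSS : Rem (SS b n) α := by
      apply Rem.sum
      intro i _
      apply Rem.sum
      intro l _
      by_cases hik : i < k + 1
      · rw [hbl i l hik]
        exact Rem.zero.congr (fun t _ => by ring)
      · have hki : (α:ℝ) < i :=
          lt_of_lt_of_le hk (by exact_mod_cast (by omega : k ≤ i))
        exact (ee_small hki).const_mul (b i l)
    have hRHS : Rem ((Dop k)^[k+1] f) α := (hSS.add hr).congr (fun t ht => (heq t ht).symm)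
    refine ⟨fun _ _ => 0, f, fun _ _ _ => rfl, fun _ _ _ => rfl,
      step2N hk (k+1) f hf hRHS, fun t _ => ?_⟩
    have : SS (fun _ _ => (0:ℂ)) n t = 0 := by
      unfold SS
      simp
    rw [this, zero_add]

noncomputable def Pre (u : ℝ → ℂ) : ℕ → (ℝ → ℂ)
  | 0 => u
  | k+1 => (Dop k)^[k+1] (Pre u k)

lemma Pre_eq_Pop (u : ℝ → ℂ) (q : ℕ) : Pre u (q+1) = Pop q u := by
  induction q with
  | zero => rfl
  | succ q ih =>
    show (Dop (q+1))^[q+2] (Pre u (q+1)) = Pop (q+1) u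
    rw [ih]
    rfl

lemma Pre_smooth {u : ℝ → ℂ} (hu : ∀ t ∈ Ioc (0:ℝ) 1, ContDiffAt ℝ (⊤:ℕ∞) u t) (k : ℕ) :
    ∀ t ∈ Ioc (0:ℝ) 1, ContDiffAt ℝ (⊤:ℕ∞) (Pre u k) t := by
  induction k with
  | zero => exact hu
  | succ k ih => exact fun t ht => contDiffAt_Dop_iter k (k+1) (ih t ht)

lemma expandPop {u : ℝ → ℂ} (hu : ∀ t ∈ Ioc (0:ℝ) 1, ContDiffAt ℝ (⊤:ℕ∞) u t)
    {q : ℕ} {α : ℝ} (hne : ∀ j : ℕ, (j:ℝ) ≠ α) (hP : Rem (Pop q u) α) :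
    ∃ b : ℕ → ℕ → ℂ, ∃ r : ℝ → ℂ, (∀ i l, i < l → b i l = 0) ∧ Rem r α ∧
      ∀ t ∈ Ioc (0:ℝ) 1, u t = SS b (q+1) t + r t := by
  have H : ∀ j k : ℕ, k + j = q + 1 →
      ∃ b : ℕ → ℕ → ℂ, ∃ r : ℝ → ℂ, (∀ i l, i < l → b i l = 0) ∧
        (∀ i l, i < k → b i l = 0) ∧ Rem r α ∧
        ∀ t ∈ Ioc (0:ℝ) 1, Pre u k t = SS b (q+1) t + r t := by
    intro j
    induction j with
    | zero =>
      intro k hk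
      have hk' : k = q + 1 := by omega
      subst hk'
      refine ⟨fun _ _ => 0, Pop q u, fun _ _ _ => rfl, fun _ _ _ => rfl, hP, fun t _ => ?_⟩
      rw [Pre_eq_Pop]
      have : SS (fun _ _ => (0:ℂ)) (q+1) t = 0 := by unfold SS; simp
      rw [this, zero_add]
    | succ j ih =>
      intro k hk
      obtain ⟨b, r, hbn, hbl, hr, heq⟩ := ih (k+1) (by omega)
      have heq' : ∀ t ∈ Ioc (0:ℝ) 1, (Dop k)^[k+1] (Pre u k) t = SS b (q+1) t + r t := by
        intro t ht
        exact heq t ht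
      exact levelPeel (by omega : k < q+1) hne (Pre_smooth hu k) hbn hbl hr heq'
  obtain ⟨b, r, hbn, _, hr, heq⟩ := H (q+1) 0 (by omega)
  exact ⟨b, r, hbn, hr, heq⟩

/-- truncated expansion to order m with exponent m - δ -/
lemma expand_trunc {u : ℝ → ℂ} (hu : ∀ t ∈ Ioc (0:ℝ) 1, ContDiffAt ℝ (⊤:ℕ∞) u t)
    {q m : ℕ} {α : ℝ} (hne : ∀ j : ℕ, (j:ℝ) ≠ α) (hαm : α < m)
    (hP : Rem (Pop q u) α) :
    ∃ b : ℕ → ℕ → ℂ, (∀ i l, i < l → b i l = 0) ∧ Rem (fun t => u t - SS b m t) α := by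
  classical
  obtain ⟨b, r, hbn, hr, heq⟩ := expandPop hu hne hP
  set bt : ℕ → ℕ → ℂ := fun i l => if i ≤ q then b i l else 0 with hbt
  have hbtn : ∀ i l, i < l → bt i l = 0 := by
    intro i l hil
    show (if i ≤ q then b i l else 0) = 0
    by_cases hiq : i ≤ q
    · rw [if_pos hiq]; exact hbn i l hil
    · rw [if_neg hiq]
  have heqt : ∀ t ∈ Ioc (0:ℝ) 1, u t = SS bt (q+1) t + r t := by
    intro t ht
    have : SS bt (q+1) t = SS b (q+1) t := by
      unfold SS
      apply Finset.sum_congr rfl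
      intro i hi
      apply Finset.sum_congr rfl
      intro l _
      show (if i ≤ q then b i l else 0) * ee i l t = _
      rw [if_pos (Nat.lt_succ_iff.mp (Finset.mem_range.mp hi))]
    rw [this]
    exact heq t ht
  refine ⟨bt, hbtn, ?_⟩
  have key : ∀ t ∈ Ioc (0:ℝ) 1,
      u t - SS bt m t = r t + (SS bt (q+1) t - SS bt m t) := by
    intro t ht
    rw [heqt t ht]
    ring
  have htail : Rem (fun t => SS bt (q+1) t - SS bt m t) α := by
    rcases le_total (q+1) m with hqm | hqm
    · have hz : ∀ t, SS bt (q+1) t - SS bt m t = 0 := by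
        intro t
        have h1 : ∑ i ∈ Finset.Ico (q+1) m, ∑ l ∈ Finset.range (i+1), bt i l * ee i l t
            = 0 := by
          apply Finset.sum_eq_zero
          intro i hi
          apply Finset.sum_eq_zero
          intro l _
          have : ¬ i ≤ q := by have := (Finset.mem_Ico.mp hi).1; omega
          show (if i ≤ q then b i l else 0) * ee i l t = 0
          rw [if_neg this, zero_mul]
        have h2 := Finset.sum_Ico_eq_sub
          (fun i => ∑ l ∈ Finset.range (i+1), bt i l * ee i l t) hqm
        rw [h1] at h2
        unfold SS
        linear_combination h2
      exact Rem.zero.congr (fun t _ => (hz t).symm)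
    · have hz : ∀ t, SS bt (q+1) t - SS bt m t
          = ∑ i ∈ Finset.Ico m (q+1), ∑ l ∈ Finset.range (i+1), bt i l * ee i l t := by
        intro t
        rw [Finset.sum_Ico_eq_sub _ hqm]
        unfold SS
        ring
      apply Rem.congr (f := fun t => ∑ i ∈ Finset.Ico m (q+1), ∑ l ∈ Finset.range (i+1),
          bt i l * ee i l t) (fun t _ => (hz t).symm)
      apply Rem.sum
      intro i hi
      apply Rem.sum
      intro l _
      have him : m ≤ i := (Finset.mem_Ico.mp hi).1
      have hαi : α < i := lt_of_lt_of_le hαm (by exact_mod_cast him)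
      exact (ee_small hαi).const_mul (bt i l)
  exact (hr.add htail).congr (fun t ht => (key t ht).symm)

lemma log_ge_one {t : ℝ} (ht0 : 0 < t) (htr : t < Real.exp (-1)) : 1 ≤ |Real.log t| := by
  have h1 : Real.log t < -1 := by
    have := Real.log_lt_log ht0 htr
    rwa [Real.log_exp] at this
  rw [abs_of_nonpos (by linarith)]
  linarith

lemma tendsto_inv_abs_log : Tendsto (fun t => |Real.log t|⁻¹) (nhdsWithin 0 (Ioi (0:ℝ))) (nhds 0) := by
  have h1 : Tendsto Real.log (nhdsWithin 0 (Ioi (0:ℝ))) atBot := by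
    apply Real.tendsto_log_nhdsNE_zero.mono_left
    apply nhdsWithin_mono
    exact fun x hx => mem_compl_singleton_iff.mpr (ne_of_gt hx)
  have h2 : Tendsto (fun t => |Real.log t|) (nhdsWithin 0 (Ioi (0:ℝ))) atTop :=
    tendsto_abs_atBot_atTop.comp h1
  exact h2.inv_tendsto_atTop

lemma tendsto_rpow_zero {p : ℝ} (hp : 0 < p) :
    Tendsto (fun t : ℝ => t ^ p) (nhdsWithin 0 (Ioi (0:ℝ))) (nhds 0) := by
  have h := (Real.continuousAt_rpow_const 0 p (Or.inr hp.le)).continuousWithinAt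
    (s := Ioi (0:ℝ))
  rw [ContinuousWithinAt, Real.zero_rpow hp.ne'] at h
  exact h

lemma tendsto_ee_div {i l i0 l0 : ℕ} (hl : l ≤ i) (hl0 : l0 ≤ i0)
    (h : i0 < i ∨ (i = i0 ∧ l < l0)) :
    Tendsto (fun t => ee i l t / ee i0 l0 t) (nhdsWithin 0 (Ioi (0:ℝ))) (nhds 0) := by
  set r : ℝ := min (Real.exp (-1)) 1 with hr
  have hr0 : 0 < r := lt_min (Real.exp_pos _) one_pos
  have hmem : Ioo (0:ℝ) r ∈ nhdsWithin 0 (Ioi (0:ℝ)) :=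
    Ioo_mem_nhdsGT_of_mem ⟨le_refl 0, hr0⟩
  rcases h with hi | ⟨heq, hll⟩
  · obtain ⟨K, hK, hKb⟩ := loglem l (by norm_num : (0:ℝ) < 1/2)
    apply squeeze_zero_norm' (a := fun t => t * (K * t ^ (-((1:ℝ)/2))))
    · filter_upwards [hmem] with t ht
      obtain ⟨ht0, htr⟩ := ht
      have ht1 : t ≤ 1 := le_of_lt (lt_of_lt_of_le htr (min_le_right _ _))
      have hte : t < Real.exp (-1) := lt_of_lt_of_le htr (min_le_left _ _)
      have hlog1 : 1 ≤ |Real.log t| := log_ge_one ht0 hte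
      rw [norm_div, norm_ee ht0, norm_ee ht0]
      have hi0pos : (0:ℝ) < t ^ i0 := pow_pos ht0 _
      calc t ^ i * |Real.log t| ^ l / (t ^ i0 * |Real.log t| ^ l0)
          ≤ t ^ i * |Real.log t| ^ l / t ^ i0 := by
            apply div_le_div_of_nonneg_left _ hi0pos _
            · positivity
            · exact le_mul_of_one_le_right hi0pos.le (one_le_pow₀ hlog1)
        _ = t ^ (i - i0) * |Real.log t| ^ l := by
            rw [pow_sub₀ t ht0.ne' hi.le]
            ring
        _ ≤ t ^ (i - i0) * (K * t ^ (-((1:ℝ)/2))) := by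
            apply mul_le_mul_of_nonneg_left _ (pow_nonneg ht0.le _)
            exact hKb t ⟨ht0, ht1⟩
        _ ≤ t * (K * t ^ (-((1:ℝ)/2))) := by
            apply mul_le_mul_of_nonneg_right _ (by positivity)
            calc t ^ (i - i0) ≤ t ^ 1 := pow_le_pow_of_le_one ht0.le ht1 (by omega)
              _ = t := pow_one t
    · have hlim : Tendsto (fun t : ℝ => t * (K * t ^ (-((1:ℝ)/2))))
          (nhdsWithin 0 (Ioi (0:ℝ))) (nhds 0) := by
        have he : ∀ t ∈ Ioi (0:ℝ), t * (K * t ^ (-((1:ℝ)/2))) = K * t ^ ((1:ℝ)/2) := by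
          intro t ht
          have h2 := Real.rpow_add ht (-((1:ℝ)/2)) 1
          rw [Real.rpow_one] at h2
          have h3 : (-((1:ℝ)/2) + 1 : ℝ) = 1/2 := by norm_num
          rw [h3] at h2
          rw [h2]
          ring
        have hbase : Tendsto (fun t : ℝ => K * t ^ ((1:ℝ)/2))
            (nhdsWithin 0 (Ioi (0:ℝ))) (nhds 0) := by
          have := (tendsto_rpow_zero (by norm_num : (0:ℝ) < 1/2)).const_mul K
          rwa [mul_zero] at this
        apply Tendsto.congr' _ hbase
        filter_upwards [self_mem_nhdsWithin] with t ht
        exact (he t ht).symm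
      exact hlim
  · subst heq
    apply squeeze_zero_norm' (a := fun t => |Real.log t|⁻¹)
    · filter_upwards [hmem] with t ht
      obtain ⟨ht0, htr⟩ := ht
      have hte : t < Real.exp (-1) := lt_of_lt_of_le htr (min_le_left _ _)
      have hlog1 : 1 ≤ |Real.log t| := log_ge_one ht0 hte
      rw [norm_div, norm_ee ht0, norm_ee ht0]
      have hlogpos : 0 < |Real.log t| := lt_of_lt_of_le one_pos hlog1
      rw [div_le_iff₀ (mul_pos (pow_pos ht0 _) (pow_pos hlogpos _))]
      have key : |Real.log t| ^ l * |Real.log t| ≤ |Real.log t| ^ l0 := by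
        rw [← pow_succ]
        exact pow_le_pow_right₀ hlog1 (by omega)
      calc t ^ i * |Real.log t| ^ l
          = t ^ i * |Real.log t| ^ l * |Real.log t| * |Real.log t|⁻¹ := by
            field_simp
        _ ≤ t ^ i * |Real.log t| ^ l0 * |Real.log t|⁻¹ := by
            apply mul_le_mul_of_nonneg_right _ (inv_nonneg.mpr hlogpos.le)
            rw [mul_assoc]
            exact mul_le_mul_of_nonneg_left key (pow_nonneg ht0.le _)
        _ = |Real.log t|⁻¹ * (t ^ i * |Real.log t| ^ l0) := by ring
    · exact tendsto_inv_abs_log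

lemma ee_ne_zero {i l : ℕ} {t : ℝ} (ht0 : 0 < t) (ht1 : t < 1) : ee i l t ≠ 0 := by
  apply mul_ne_zero
  · exact pow_ne_zero _ (by exact_mod_cast ht0.ne')
  · apply pow_ne_zero
    have : Real.log t ≠ 0 := (Real.log_neg ht0 ht1).ne
    exact_mod_cast this

lemma coeff_zero {M : ℕ} {c : ℕ → ℕ → ℂ} {β C : ℝ} (hC : 0 < C)
    (hb : ∀ t ∈ Ioc (0:ℝ) 1, ‖SS c M t‖ ≤ C * t ^ β)
    {i0 l0 : ℕ} (hi0 : i0 < M) (hl0 : l0 ≤ i0) (hβ : (i0:ℝ) < β)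
    (hlow : ∀ i l, l ≤ i → i < i0 → c i l = 0)
    (hhigh : ∀ l, l0 < l → l ≤ i0 → c i0 l = 0) :
    c i0 l0 = 0 := by
  classical
  set G : ℝ → ℂ := fun t => SS c M t / ee i0 l0 t with hG
  have h1 : Tendsto G (nhdsWithin 0 (Ioi (0:ℝ))) (nhds (c i0 l0)) := by
    have hGeq : ∀ t : ℝ, G t = ∑ i ∈ Finset.range M, ∑ l ∈ Finset.range (i+1),
        c i l * (ee i l t / ee i0 l0 t) := by
      intro t
      rw [hG]
      show SS c M t / ee i0 l0 t = _
      unfold SS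
      rw [Finset.sum_div]
      apply Finset.sum_congr rfl
      intro i _
      rw [Finset.sum_div]
      apply Finset.sum_congr rfl
      intro l _
      rw [mul_div_assoc]
    have hlimsum : Tendsto (fun t => ∑ i ∈ Finset.range M, ∑ l ∈ Finset.range (i+1),
        c i l * (ee i l t / ee i0 l0 t)) (nhdsWithin 0 (Ioi (0:ℝ)))
        (nhds (∑ i ∈ Finset.range M, ∑ l ∈ Finset.range (i+1),
          if i = i0 ∧ l = l0 then c i0 l0 else 0)) := by
      apply tendsto_finset_sum
      intro i hiM
      apply tendsto_finset_sum
      intro l hli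
      have hli' : l ≤ i := Nat.lt_succ_iff.mp (Finset.mem_range.mp hli)
      by_cases hc : i = i0 ∧ l = l0
      · obtain ⟨rfl, rfl⟩ := hc
        rw [if_pos ⟨rfl, rfl⟩]
        have hmem : Ioo (0:ℝ) 1 ∈ nhdsWithin 0 (Ioi (0:ℝ)) :=
          Ioo_mem_nhdsGT_of_mem ⟨le_refl 0, one_pos⟩
        apply Tendsto.congr' _ tendsto_const_nhds
        filter_upwards [hmem] with t ht
        rw [div_self (ee_ne_zero ht.1 ht.2), mul_one]
      · rw [if_neg hc]
        rcases Nat.lt_trichotomy i i0 with hii | hii | hii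
        · rw [hlow i l hli' hii]
          simpa using tendsto_const_nhds (α := ℂ) (f := nhdsWithin 0 (Ioi (0:ℝ)))
        · subst hii
          rcases Nat.lt_trichotomy l l0 with hll | hll | hll
          · have := (tendsto_ee_div hli' hl0 (Or.inr ⟨rfl, hll⟩)).const_mul (c i l)
            rwa [mul_zero] at this
          · exact absurd ⟨rfl, hll⟩ hc
          · rw [hhigh l hll hli']
            simpa using tendsto_const_nhds (α := ℂ) (f := nhdsWithin 0 (Ioi (0:ℝ)))
        · have := (tendsto_ee_div hli' hl0 (Or.inl hii)).const_mul (c i l)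
          rwa [mul_zero] at this
    have hsum : (∑ i ∈ Finset.range M, ∑ l ∈ Finset.range (i+1),
        if i = i0 ∧ l = l0 then c i0 l0 else 0) = c i0 l0 := by
      rw [Finset.sum_eq_single_of_mem i0 (Finset.mem_range.mpr hi0)]
      · rw [Finset.sum_eq_single_of_mem l0 (Finset.mem_range.mpr (by omega))]
        · rw [if_pos ⟨rfl, rfl⟩]
        · intro l _ hl
          rw [if_neg (by rintro ⟨_, rfl⟩; omega)]
      · intro i _ hi
        apply Finset.sum_eq_zero
        intro l _
        rw [if_neg (by rintro ⟨rfl, _⟩; omega)]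
    rw [← hsum]
    exact Tendsto.congr (fun t => (hGeq t).symm) hlimsum
  have h2 : Tendsto G (nhdsWithin 0 (Ioi (0:ℝ))) (nhds 0) := by
    set rr : ℝ := min (Real.exp (-1)) 1 with hrr
    have hr0 : 0 < rr := lt_min (Real.exp_pos _) one_pos
    have hmem : Ioo (0:ℝ) rr ∈ nhdsWithin 0 (Ioi (0:ℝ)) :=
      Ioo_mem_nhdsGT_of_mem ⟨le_refl 0, hr0⟩
    apply squeeze_zero_norm' (a := fun t => C * t ^ (β - (i0:ℝ)))
    · filter_upwards [hmem] with t ht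
      obtain ⟨ht0, htr⟩ := ht
      have ht1 : t ≤ 1 := le_of_lt (lt_of_lt_of_le htr (min_le_right _ _))
      have hte : t < Real.exp (-1) := lt_of_lt_of_le htr (min_le_left _ _)
      have hlog1 : 1 ≤ |Real.log t| := log_ge_one ht0 hte
      rw [hG]
      show ‖SS c M t / ee i0 l0 t‖ ≤ _
      rw [norm_div, norm_ee ht0]
      have hi0pos : (0:ℝ) < t ^ i0 := pow_pos ht0 _
      calc ‖SS c M t‖ / (t ^ i0 * |Real.log t| ^ l0)
          ≤ ‖SS c M t‖ / t ^ i0 := by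
            apply div_le_div_of_nonneg_left (norm_nonneg _) hi0pos
            exact le_mul_of_one_le_right hi0pos.le (one_le_pow₀ hlog1)
        _ ≤ C * t ^ β / t ^ i0 := by
            gcongr
            exact hb t ⟨ht0, ht1⟩
        _ = C * t ^ (β - (i0:ℝ)) := by
            rw [mul_div_assoc]
            congr 1
            rw [← Real.rpow_natCast t i0, ← Real.rpow_sub ht0]
    · have := (tendsto_rpow_zero (by linarith : (0:ℝ) < β - i0)).const_mul C
      rwa [mul_zero] at this
  exact tendsto_nhds_unique h1 h2

lemma SS_coeffs_zero {M : ℕ} {c : ℕ → ℕ → ℂ} {β C : ℝ} (hC : 0 < C)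
    (hb : ∀ t ∈ Ioc (0:ℝ) 1, ‖SS c M t‖ ≤ C * t ^ β) :
    ∀ i, i < M → (i:ℝ) < β → ∀ l, l ≤ i → c i l = 0 := by
  intro i
  induction i using Nat.strong_induction_on with
  | _ i ih =>
    intro hiM hiβ
    have hdown : ∀ j l, l ≤ i → i ≤ l + j → c i l = 0 := by
      intro j
      induction j with
      | zero =>
        intro l hl hij
        have hli : l = i := by omega
        subst hli
        apply coeff_zero hC hb hiM le_rfl hiβ
        · intro i' l' hl' hi'
          have hi'β : (i':ℝ) < β := by
            have hcast : (i':ℝ) < l := by exact_mod_cast hi'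
            linarith
          exact ih i' hi' (by omega) hi'β l' hl'
        · intro l' hgt hle
          exact absurd hgt (by omega)
      | succ j ihj =>
        intro l hl hij
        by_cases hcase : i ≤ l + j
        · exact ihj l hl hcase
        · apply coeff_zero hC hb hiM hl hiβ
          · intro i' l' hl' hi'
            have hi'β : (i':ℝ) < β := by
              have h1 : (i':ℝ) < i := by exact_mod_cast hi'
              linarith
            exact ih i' hi' (by omega) hi'β l' hl'
          · intro l' h1 h2
            exact ihj l' h2 (by omega)
    intro l hl
    exact hdown (i - l) l hl (by omega)

lemma delta_ne {m j : ℕ} {δ : ℝ} (hδ : δ ∈ Ioo (0:ℝ) 1) : (j:ℝ) ≠ (m:ℝ) - δ := by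
  intro hj
  obtain ⟨h0, h1⟩ := hδ
  rcases Nat.lt_or_ge j m with hc | hc
  · have : (j:ℝ) + 1 ≤ m := by exact_mod_cast hc
    linarith
  · have : (m:ℝ) ≤ j := by exact_mod_cast hc
    linarith

lemma exp_instance {u : ℝ → ℂ}
    (hu : ∀ t ∈ Ioc (0:ℝ) 1, ContDiffAt ℝ (⊤:ℕ∞) u t)
    (h : ∀ m : ℕ, ∃ q : ℕ, ∀ j : ℕ, ∀ δ ∈ Ioo (0:ℝ) 1, ∃ C > (0:ℝ),
      ∀ t ∈ Ioc (0:ℝ) 1, ‖(Eop^[j] (Pop q u)) t‖ ≤ C * t ^ ((m:ℝ) - δ))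
    (m : ℕ) {δ : ℝ} (hδ : δ ∈ Ioo (0:ℝ) 1) :
    ∃ b : ℕ → ℕ → ℂ, (∀ i l, i < l → b i l = 0) ∧
      Rem (fun t => u t - SS b m t) ((m:ℝ) - δ) := by
  obtain ⟨q, hq⟩ := h m
  obtain ⟨C, hC, hCb⟩ := hq 0 δ hδ
  have hP : Rem (Pop q u) ((m:ℝ) - δ) := by
    refine ⟨C, hC, fun t ht => ?_⟩
    have := hCb t ht
    rwa [Function.iterate_zero, id_eq] at this
  exact expand_trunc hu (fun j => delta_ne hδ) (by
    obtain ⟨h0, _⟩ := hδ; linarith) hP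

theorem stmt0' (u : ℝ → ℂ)
    (hu : ∀ t ∈ Set.Ioc (0 : ℝ) 1, ContDiffAt ℝ (⊤ : ℕ∞) u t)
    (h : ∀ m : ℕ, ∃ q : ℕ, ∀ j : ℕ, ∀ δ ∈ Set.Ioo (0 : ℝ) 1, ∃ C > (0 : ℝ),
      ∀ t ∈ Set.Ioc (0 : ℝ) 1, ‖(Eop^[j] (Pop q u)) t‖ ≤ C * t ^ ((m : ℝ) - δ)) :
    ∃ a : ℕ → ℕ → ℂ, ∀ q : ℕ, ∀ δ ∈ Set.Ioo (0 : ℝ) 1, ∃ C > (0 : ℝ),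
      ∀ t ∈ Set.Ioc (0 : ℝ) 1,
        ‖u t - ∑ k ∈ Finset.range q, ∑ l ∈ Finset.range (k + 1),
            a k l * (t : ℂ) ^ k * (Real.log t : ℂ) ^ l‖ ≤ C * t ^ ((q : ℝ) - δ) := by
  classical
  have hhalf : (1/2 : ℝ) ∈ Ioo (0:ℝ) 1 := by norm_num
  -- reference expansions at δ = 1/2 for each order m
  have hB : ∀ m : ℕ, ∃ b : ℕ → ℕ → ℂ, (∀ i l, i < l → b i l = 0) ∧
      Rem (fun t => u t - SS b m t) ((m:ℝ) - 1/2) := fun m => exp_instance hu h m hhalf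
  choose B hBn hBr using hB
  set a : ℕ → ℕ → ℂ := fun k l => B (k+1) k l with ha
  refine ⟨a, ?_⟩
  intro q δ hδ
  obtain ⟨bq, hbqn, hbqr⟩ := exp_instance hu h q hδ
  -- coefficients agree
  have hagree : ∀ k, k < q → ∀ l, l ≤ k → a k l = bq k l := by
    intro k hkq l hlk
    set β : ℝ := min ((k:ℝ) + 1/2) ((q:ℝ) - δ) with hβ
    have hkβ : (k:ℝ) < β := by
      apply lt_min (by linarith)
      have hk1 : (k:ℝ) + 1 ≤ q := by exact_mod_cast hkq
      obtain ⟨_, h1⟩ := hδ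
      linarith
    set Bext : ℕ → ℕ → ℂ := fun i l => if i < k + 1 then B (k+1) i l else 0 with hBext
    set cd : ℕ → ℕ → ℂ := fun i l => bq i l - Bext i l with hcd
    have hSSB : ∀ t, SS Bext q t = SS (B (k+1)) (k+1) t := by
      intro t
      unfold SS
      rw [← Finset.sum_subset (Finset.range_subset_range.mpr (by omega : k+1 ≤ q))]
      · apply Finset.sum_congr rfl
        intro i hi
        apply Finset.sum_congr rfl
        intro l _
        show (if i < k + 1 then B (k+1) i l else 0) * ee i l t = _
        rw [if_pos (Finset.mem_range.mp hi)]
      · intro i _ hi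
        apply Finset.sum_eq_zero
        intro l _
        show (if i < k + 1 then B (k+1) i l else 0) * ee i l t = 0
        rw [if_neg (by simpa using hi), zero_mul]
    have hSScd : ∀ t, SS cd q t = SS bq q t - SS Bext q t := by
      intro t
      unfold SS
      rw [← Finset.sum_sub_distrib]
      apply Finset.sum_congr rfl
      intro i _
      rw [← Finset.sum_sub_distrib]
      apply Finset.sum_congr rfl
      intro l _
      show (bq i l - Bext i l) * ee i l t = _
      ring
    have hRemcd : Rem (SS cd q) β := by
      have h1 : Rem (fun t => u t - SS (B (k+1)) (k+1) t) β := by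
        apply (hBr (k+1)).exp_le
        have : (((k+1:ℕ)):ℝ) - 1/2 = (k:ℝ) + 1/2 := by push_cast; ring
        rw [this]
        exact min_le_left _ _
      have h2 : Rem (fun t => u t - SS bq q t) β := hbqr.exp_le (min_le_right _ _)
      apply (h1.sub h2).congr
      intro t _
      rw [hSScd t, hSSB t]
      ring
    obtain ⟨C, hC0, hCb⟩ := hRemcd
    have hz := SS_coeffs_zero hC0 hCb k hkq hkβ l hlk
    have : cd k l = bq k l - B (k+1) k l := by
      show bq k l - Bext k l = _
      rw [hBext]
      show bq k l - (if k < k + 1 then B (k+1) k l else 0) = _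
      rw [if_pos (by omega)]
    rw [this] at hz
    rw [ha]
    show B (k+1) k l = bq k l
    have := sub_eq_zero.mp hz
    exact this.symm
  obtain ⟨C, hC, hCb⟩ := hbqr
  refine ⟨C, hC, fun t ht => ?_⟩
  have hsum : ∑ k ∈ Finset.range q, ∑ l ∈ Finset.range (k + 1),
      a k l * (t : ℂ) ^ k * (Real.log t : ℂ) ^ l = SS bq q t := by
    unfold SS
    apply Finset.sum_congr rfl
    intro k hk
    apply Finset.sum_congr rfl
    intro l hl
    rw [hagree k (Finset.mem_range.mp hk) l (Nat.lt_succ_iff.mp (Finset.mem_range.mp hl))]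
    rw [ee]
    ring
  rw [hsum]
  exact hCb t ht

/-- A function annihilated to high order by the products `∏_{k=0}^{q} (t∂_t − k)^{k+1}`,
uniformly in b-derivatives, has a full asymptotic expansion `∑ t^k (log t)^l a_{k,l}`
at `t = 0`. -/
theorem stmt0 (u : ℝ → ℂ)
    (hu : ∀ t ∈ Set.Ioc (0 : ℝ) 1, ContDiffAt ℝ (⊤ : ℕ∞) u t)
    (h : ∀ m : ℕ, ∃ q : ℕ, ∀ j : ℕ, ∀ δ ∈ Set.Ioo (0 : ℝ) 1, ∃ C > (0 : ℝ),
      ∀ t ∈ Set.Ioc (0 : ℝ) 1, ‖(Eop^[j] (Pop q u)) t‖ ≤ C * t ^ ((m : ℝ) - δ)) :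
    ∃ a : ℕ → ℕ → ℂ, ∀ q : ℕ, ∀ δ ∈ Set.Ioo (0 : ℝ) 1, ∃ C > (0 : ℝ),
      ∀ t ∈ Set.Ioc (0 : ℝ) 1,
        ‖u t - ∑ k ∈ Finset.range q, ∑ l ∈ Finset.range (k + 1),
            a k l * (t : ℂ) ^ k * (Real.log t : ℂ) ^ l‖ ≤ C * t ^ ((q : ℝ) - δ) :=
  stmt0' u hu h
end

section
/- Let k, a, C be real numbers with a < k and C ≥ 0, and let F : ℝ → ℂ be differentiable at every point of (0,1] with ‖t·F′(t) − k·F(t)‖ ≤ C·t^a for all t ∈ (0,1]. Then ‖F(t)‖ ≤ (‖F(1)‖ + C/(k−a))·t^a for all t ∈ (0,1]. -/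
/-- If `(t∂_t − k)F = O(t^a)` on `(0,1]` with `a < k`, then `F = O(t^a)`:
explicitly, `‖F(t)‖ ≤ (‖F(1)‖ + C/(k−a))·t^a`. -/
theorem stmt2 (k a C : ℝ) (hak : a < k) (hC : 0 ≤ C) (F : ℝ → ℂ)
    (hdiff : ∀ t ∈ Set.Ioc (0 : ℝ) 1, DifferentiableAt ℝ F t)
    (hbound : ∀ t ∈ Set.Ioc (0 : ℝ) 1,
      ‖(t : ℂ) * deriv F t - (k : ℂ) * F t‖ ≤ C * t ^ a) :
    ∀ t ∈ Set.Ioc (0 : ℝ) 1, ‖F t‖ ≤ (‖F 1‖ + C / (k - a)) * t ^ a := by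
  have hka : (0:ℝ) < k - a := sub_pos.2 hak
  set G : ℝ → ℂ := fun s => (s ^ (-k) : ℝ) • F s with hGdef
  set g' : ℝ → ℂ := fun u => (u ^ (-k-1) : ℝ) • ((u:ℂ) * deriv F u - (k:ℂ) * F u)
    with hg'def
  have hGd : ∀ u ∈ Set.Ioc (0:ℝ) 1, HasDerivAt G (g' u) u := by
    intro u hu
    have hu0 : (0:ℝ) < u := hu.1
    have h1 : HasDerivAt (fun s : ℝ => s ^ (-k)) (-k * u ^ (-k - 1)) u := by
      simpa using Real.hasDerivAt_rpow_const (x := u) (p := -k) (Or.inl hu0.ne')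
    have h2 : HasDerivAt F (deriv F u) u := (hdiff u hu).hasDerivAt
    have h3 := h1.smul h2
    have key : u ^ (-k-1) * u = u ^ (-k) := by
      have h := (Real.rpow_add hu0 (-k-1) 1).symm
      rw [Real.rpow_one] at h
      rw [show (-k-1+1 : ℝ) = -k by ring] at h
      exact h
    have keyC : ((u ^ (-k-1) : ℝ) : ℂ) * (u : ℂ) = ((u ^ (-k) : ℝ) : ℂ) := by
      exact_mod_cast congrArg (fun x : ℝ => (x : ℂ)) key
    refine h3.congr_deriv (Eq.symm ?_)
    simp only [hg'def, Complex.real_smul]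
    push_cast
    linear_combination (deriv F u) * keyC
  intro t ht
  obtain ⟨ht0, ht1⟩ := ht
  -- reversed function on [t,1]
  set f : ℝ → ℂ := fun s => G (1 + t - s) with hfdef
  have hmem : ∀ x ∈ Set.Icc t 1, (1 + t - x) ∈ Set.Ioc (0:ℝ) 1 := by
    intro x hx
    constructor <;> [linarith [hx.2]; linarith [hx.1]]
  have hσ : ∀ x : ℝ, HasDerivAt (fun s : ℝ => 1 + t - s) (-1) x := by
    intro x
    simpa using (hasDerivAt_id x).const_sub (1 + t)
  have hfd : ∀ x ∈ Set.Icc t 1, HasDerivAt f (-g' (1 + t - x)) x := by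
    intro x hx
    have := (hGd _ (hmem x hx)).scomp (x := x) (hσ x)
    simp only [neg_one_smul] at this
    exact this
  set B : ℝ → ℝ := fun s => ‖F 1‖ + C / (k - a) * ((1 + t - s) ^ (a - k) - 1) with hBdef
  set B' : ℝ → ℝ := fun s => C * (1 + t - s) ^ (a - k - 1) with hB'def
  have hBd : ∀ x ∈ Set.Icc t 1, HasDerivAt B (B' x) x := by
    intro x hx
    have hpos : (0:ℝ) < 1 + t - x := (hmem x hx).1
    have h1 : HasDerivAt (fun s : ℝ => (1 + t - s) ^ (a - k))
        ((a - k) * (1 + t - x) ^ (a - k - 1) * (-1)) x :=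
      (Real.hasDerivAt_rpow_const (x := 1 + t - x) (p := a - k) (Or.inl hpos.ne')).comp x (hσ x)
    have h2 := ((h1.sub_const 1).const_mul (C / (k - a))).const_add ‖F 1‖
    refine h2.congr_deriv (Eq.symm ?_)
    field_simp
    ring
  have hfc : ContinuousOn f (Set.Icc t 1) := fun x hx =>
    ((hfd x hx).continuousAt.continuousWithinAt)
  have hBc : ContinuousOn B (Set.Icc t 1) := fun x hx =>
    ((hBd x hx).continuousAt.continuousWithinAt)
  have ha : ‖f t‖ ≤ B t := by
    simp [hfdef, hBdef, hGdef, Real.one_rpow]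
  have bound : ∀ x ∈ Set.Ico t 1, ‖-g' (1 + t - x)‖ ≤ B' x := by
    intro x hx
    have hx' : x ∈ Set.Icc t 1 := ⟨hx.1, hx.2.le⟩
    have hu := hmem x hx'
    have hu0 : (0:ℝ) < 1 + t - x := hu.1
    set u := 1 + t - x
    have h1 : ‖g' u‖ = u ^ (-k-1) * ‖(u:ℂ) * deriv F u - (k:ℂ) * F u‖ := by
      rw [hg'def]
      rw [norm_smul, Real.norm_eq_abs, abs_of_pos (Real.rpow_pos_of_pos hu0 _)]
    have h2 : u ^ (-k-1) * ‖(u:ℂ) * deriv F u - (k:ℂ) * F u‖ ≤ u ^ (-k-1) * (C * u ^ a) :=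
      mul_le_mul_of_nonneg_left (hbound u hu) (Real.rpow_pos_of_pos hu0 _).le
    have h3 : u ^ (-k-1) * (C * u ^ a) = C * u ^ (a - k - 1) := by
      rw [show (a - k - 1 : ℝ) = (-k-1) + a by ring, Real.rpow_add hu0]
      ring
    rw [norm_neg, h1]
    rw [hB'def]
    calc u ^ (-k-1) * ‖(u:ℂ) * deriv F u - (k:ℂ) * F u‖ ≤ u ^ (-k-1) * (C * u ^ a) := h2
      _ = C * u ^ (a - k - 1) := h3
  have main := image_norm_le_of_norm_deriv_right_le_deriv_boundary' hfc
    (fun x hx => (hfd x ⟨hx.1, hx.2.le⟩).hasDerivWithinAt) ha hBc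
    (fun x hx => (hBd x ⟨hx.1, hx.2.le⟩).hasDerivWithinAt) bound
  have h1t : (1:ℝ) ∈ Set.Icc t 1 := ⟨ht1, le_refl 1⟩
  have hGt : ‖G t‖ ≤ ‖F 1‖ + C / (k - a) * (t ^ (a - k) - 1) := by
    have := main h1t
    simpa [hfdef, hBdef] using this
  -- recover F t
  have hFt : ‖F t‖ = t ^ k * ‖G t‖ := by
    rw [hGdef]
    simp only [norm_smul, Real.norm_eq_abs, abs_of_pos (Real.rpow_pos_of_pos ht0 (-k))]
    rw [← mul_assoc, ← Real.rpow_add ht0]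
    simp
  rw [hFt]
  have htk : t ^ k ≤ t ^ a := Real.rpow_le_rpow_of_exponent_ge ht0 ht1 hak.le
  have hta : t ^ k * t ^ (a - k) = t ^ a := by
    rw [← Real.rpow_add ht0]; ring_nf
  have htkpos : (0:ℝ) < t ^ k := Real.rpow_pos_of_pos ht0 _
  have hCk : 0 ≤ C / (k - a) := div_nonneg hC hka.le
  have hF1 : 0 ≤ ‖F 1‖ := norm_nonneg _
  calc t ^ k * ‖G t‖ ≤ t ^ k * (‖F 1‖ + C / (k - a) * (t ^ (a - k) - 1)) :=
        mul_le_mul_of_nonneg_left hGt htkpos.le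
    _ ≤ (‖F 1‖ + C / (k - a)) * t ^ a := by nlinarith [hta, htk, htkpos, hCk, hF1]
end

section
/- Let b > 1 and C ≥ 0 be real numbers. Let u : ℝ → ℂ be differentiable at every point of (0,1], define v(t) = t·u′(t) − u(t), and assume v is differentiable at every point of (0,1] with ‖t·v′(t) − v(t)‖ ≤ C·t^b for all t ∈ (0,1]. Then there exist constants β, β′ ∈ ℂ and C′ ≥ 0 such that ‖u(t) − β·t·log t − β′·t‖ ≤ C′·t^b for all t ∈ (0,1]. -/
open Set Filter Topology

/-- MVT-type bound: if `‖f'‖ ≤ K t^(b-2)` on `(0,1]` then for `0 < s ≤ t ≤ 1`,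
`‖f t - f s‖ ≤ K/(b-1) * t^(b-1)`. -/
lemma stmt3_diff_bound {b K : ℝ} (hb : 1 < b) (hK : 0 ≤ K) {f : ℝ → ℂ}
    (hf : ∀ t ∈ Set.Ioc (0:ℝ) 1, DifferentiableAt ℝ f t)
    (hbd : ∀ t ∈ Set.Ioc (0:ℝ) 1, ‖deriv f t‖ ≤ K * t ^ (b-2))
    {s t : ℝ} (hs : 0 < s) (hst : s ≤ t) (ht : t ≤ 1) :
    ‖f t - f s‖ ≤ K/(b-1) * t ^ (b-1) := by
  have hsub : Set.Icc s t ⊆ Set.Ioc (0:ℝ) 1 := fun x hx =>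
    ⟨lt_of_lt_of_le hs hx.1, le_trans hx.2 ht⟩
  have hbpos : (0:ℝ) < b - 1 := by linarith
  set B : ℝ → ℝ := fun x => K/(b-1) * (x ^ (b-1) - s ^ (b-1)) with hB
  have key : ∀ ⦃x⦄, x ∈ Set.Icc s t → ‖f x - f s‖ ≤ B x := by
    refine image_norm_le_of_norm_deriv_right_le_deriv_boundary'
      (f' := fun x => deriv f x) (B' := fun x => K * x ^ (b-2)) ?_ ?_ ?_ ?_ ?_ ?_
    · exact (ContinuousOn.sub (fun x hx =>
        ((hf x (hsub hx)).continuousAt).continuousWithinAt) continuousOn_const)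
    · intro x hx
      exact (((hf x (hsub ⟨hx.1, hx.2.le⟩)).hasDerivAt).sub_const (f s)).hasDerivWithinAt
    · simp [hB]
    · apply ContinuousOn.mul continuousOn_const
      apply ContinuousOn.sub _ continuousOn_const
      intro x hx
      exact (Real.continuousAt_rpow_const x (b-1)
        (Or.inl (lt_of_lt_of_le hs hx.1).ne')).continuousWithinAt
    · intro x hx
      have hx0 : x ≠ 0 := (lt_of_lt_of_le hs hx.1).ne'
      have h1 : HasDerivAt (fun y : ℝ => y ^ (b-1)) ((b-1) * x ^ (b-1-1)) x :=
        Real.hasDerivAt_rpow_const (Or.inl hx0)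
      have h2 : HasDerivAt B (K/(b-1) * ((b-1) * x ^ (b-1-1))) x := by
        simpa [hB] using ((h1.sub_const (s ^ (b-1))).const_mul (K/(b-1)))
      have heq : K/(b-1) * ((b-1) * x ^ (b-1-1)) = K * x ^ (b-2) := by
        rw [show b - 1 - 1 = b - 2 by ring]
        field_simp
      exact (heq ▸ h2).hasDerivWithinAt
    · intro x hx
      exact hbd x (hsub ⟨hx.1, hx.2.le⟩)
  have h1 := key (Set.right_mem_Icc.mpr hst)
  have hsle : (0:ℝ) ≤ s ^ (b-1) := Real.rpow_nonneg hs.le _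
  have hKd : 0 ≤ K/(b-1) := div_nonneg hK hbpos.le
  calc ‖f t - f s‖ ≤ B t := h1
    _ ≤ K/(b-1) * t ^ (b-1) := by rw [hB]; nlinarith

/-- If `‖f'‖ ≤ K t^(b-2)` on `(0,1]` with `b > 1`, then `f` has a limit `L` at `0+`
with `‖f t - L‖ ≤ K/(b-1) t^(b-1)`. -/
lemma stmt3_decay {b K : ℝ} (hb : 1 < b) (hK : 0 ≤ K) {f : ℝ → ℂ}
    (hf : ∀ t ∈ Set.Ioc (0:ℝ) 1, DifferentiableAt ℝ f t)
    (hbd : ∀ t ∈ Set.Ioc (0:ℝ) 1, ‖deriv f t‖ ≤ K * t ^ (b-2)) :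
    ∃ L : ℂ, ∀ t ∈ Set.Ioc (0:ℝ) 1, ‖f t - L‖ ≤ K/(b-1) * t ^ (b-1) := by
  have hbpos : (0:ℝ) < b - 1 := by linarith
  set seq : ℕ → ℂ := fun n => f (1/(n+1)) with hseq
  have hmem : ∀ n : ℕ, (1:ℝ)/(n+1) ∈ Set.Ioc (0:ℝ) 1 := by
    intro n
    constructor
    · positivity
    · rw [div_le_one (by positivity)]
      simp
  have hpair : ∀ n m : ℕ, n ≤ m →
      ‖seq m - seq n‖ ≤ K/(b-1) * ((1:ℝ)/(n+1)) ^ (b-1) := by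
    intro n m hnm
    have hle : (1:ℝ)/(m+1) ≤ 1/(n+1) := by
      apply div_le_div_of_nonneg_left one_pos.le (by positivity)
      have : (n:ℝ) ≤ m := Nat.cast_le.mpr hnm
      linarith
    have := stmt3_diff_bound hb hK hf hbd (hmem m).1 hle (hmem n).2
    simpa [hseq, norm_sub_rev] using this
  have hcauchy : CauchySeq seq := by
    refine cauchySeq_of_le_tendsto_0 (fun N => K/(b-1) * ((1:ℝ)/(N+1)) ^ (b-1)) ?_ ?_
    · intro n m N hn hm
      rcases le_total n m with h | h
      · calc dist (seq n) (seq m) = ‖seq m - seq n‖ := by rw [dist_eq_norm, norm_sub_rev]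
          _ ≤ K/(b-1) * ((1:ℝ)/(n+1)) ^ (b-1) := hpair n m h
          _ ≤ K/(b-1) * ((1:ℝ)/(N+1)) ^ (b-1) := by
              apply mul_le_mul_of_nonneg_left _ (div_nonneg hK hbpos.le)
              apply Real.rpow_le_rpow (hmem n).1.le _ hbpos.le
              apply div_le_div_of_nonneg_left one_pos.le (by positivity)
              have : (N:ℝ) ≤ n := Nat.cast_le.mpr hn
              linarith
      · calc dist (seq n) (seq m) = ‖seq n - seq m‖ := by rw [dist_eq_norm]
          _ ≤ K/(b-1) * ((1:ℝ)/(m+1)) ^ (b-1) := hpair m n h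
          _ ≤ K/(b-1) * ((1:ℝ)/(N+1)) ^ (b-1) := by
              apply mul_le_mul_of_nonneg_left _ (div_nonneg hK hbpos.le)
              apply Real.rpow_le_rpow (hmem m).1.le _ hbpos.le
              apply div_le_div_of_nonneg_left one_pos.le (by positivity)
              have : (N:ℝ) ≤ m := Nat.cast_le.mpr hm
              linarith
    · have h0 : Tendsto (fun N : ℕ => (1:ℝ)/(N+1)) atTop (nhds 0) :=
        tendsto_one_div_add_atTop_nhds_zero_nat
      have h1 : Tendsto (fun N : ℕ => ((1:ℝ)/(N+1)) ^ (b-1)) atTop (nhds 0) := by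
        have hcont : ContinuousAt (fun x : ℝ => x ^ (b-1)) 0 :=
          Real.continuousAt_rpow_const 0 (b-1) (Or.inr hbpos.le)
        have := hcont.tendsto.comp h0
        simpa [Real.zero_rpow hbpos.ne', Function.comp_def] using this
      simpa using h1.const_mul (K/(b-1))
  obtain ⟨L, hL⟩ := cauchySeq_tendsto_of_complete hcauchy
  refine ⟨L, fun t ht => ?_⟩
  have htend : Tendsto (fun n : ℕ => ‖f t - seq n‖) atTop (nhds ‖f t - L‖) :=
    (continuous_norm.tendsto _).comp ((tendsto_const_nhds.sub hL))
  apply le_of_tendsto htend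
  -- eventually 1/(n+1) ≤ t
  obtain ⟨N, hN⟩ := exists_nat_gt (1/t)
  filter_upwards [eventually_ge_atTop N] with n hn
  have htpos := ht.1
  have hlt : (1:ℝ)/(n+1) ≤ t := by
    rw [div_le_iff₀ (by positivity)]
    have h1 : (1:ℝ)/t < n+1 := lt_of_lt_of_le hN (by have : (N:ℝ) ≤ n := Nat.cast_le.mpr hn; linarith)
    rw [div_lt_iff₀ htpos] at h1
    nlinarith
  exact stmt3_diff_bound hb hK hf hbd (hmem n).1 hlt ht.2

/-- If `(t∂_t − 1)² u = O(t^b)` on `(0,1]` with `b > 1`, then there are coefficients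
`β, β′` with `u(t) − β·t·log t − β′·t = O(t^b)`. -/
theorem stmt3 (b C : ℝ) (hb : 1 < b) (hC : 0 ≤ C) (u : ℝ → ℂ)
    (hu : ∀ t ∈ Set.Ioc (0 : ℝ) 1, DifferentiableAt ℝ u t)
    (v : ℝ → ℂ) (hv : ∀ t : ℝ, v t = (t : ℂ) * deriv u t - u t)
    (hvdiff : ∀ t ∈ Set.Ioc (0 : ℝ) 1, DifferentiableAt ℝ v t)
    (hbound : ∀ t ∈ Set.Ioc (0 : ℝ) 1,
      ‖(t : ℂ) * deriv v t - v t‖ ≤ C * t ^ b) :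
    ∃ (β β' : ℂ) (C' : ℝ), 0 ≤ C' ∧ ∀ t ∈ Set.Ioc (0 : ℝ) 1,
      ‖u t - β * (t : ℂ) * (Real.log t : ℂ) - β' * (t : ℂ)‖ ≤ C' * t ^ b := by
  have hbpos : (0:ℝ) < b - 1 := by linarith
  -- Step 1: g = v/t
  set g : ℝ → ℂ := fun x => v x / (x : ℂ) with hg
  have hgderiv : ∀ t ∈ Set.Ioc (0:ℝ) 1,
      HasDerivAt g (((t:ℂ) * deriv v t - v t) / (t:ℂ)^2) t := by
    intro t ht
    have ht0 : (t:ℂ) ≠ 0 := by exact_mod_cast ht.1.ne'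
    have hid : HasDerivAt (fun x : ℝ => (x:ℂ)) 1 t := by
      simpa using (hasDerivAt_id t).ofReal_comp
    have := ((hvdiff t ht).hasDerivAt).div hid ht0
    refine this.congr_deriv ?_
    ring
  have hgdiff : ∀ t ∈ Set.Ioc (0:ℝ) 1, DifferentiableAt ℝ g t :=
    fun t ht => (hgderiv t ht).differentiableAt
  have hgbd : ∀ t ∈ Set.Ioc (0:ℝ) 1, ‖deriv g t‖ ≤ C * t ^ (b-2) := by
    intro t ht
    rw [(hgderiv t ht).deriv]
    have ht0 : t ≠ 0 := ht.1.ne'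
    rw [norm_div]
    have h2 : ‖(t:ℂ)^2‖ = t^(2:ℕ) := by
      rw [norm_pow, Complex.norm_real, Real.norm_of_nonneg ht.1.le]
    rw [h2, div_le_iff₀ (pow_pos ht.1 2)]
    calc ‖(t:ℂ) * deriv v t - v t‖ ≤ C * t ^ b := hbound t ht
      _ = C * t ^ (b-2) * t ^ (2:ℕ) := by
          rw [mul_assoc, ← Real.rpow_natCast t 2, ← Real.rpow_add ht.1]
          norm_num
  obtain ⟨β, hβ⟩ := stmt3_decay hb hC hgdiff hgbd
  set C₁ : ℝ := C/(b-1) with hC₁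
  have hC₁0 : 0 ≤ C₁ := div_nonneg hC hbpos.le
  have hvβ : ∀ t ∈ Set.Ioc (0:ℝ) 1, ‖v t - β * (t:ℂ)‖ ≤ C₁ * t ^ b := by
    intro t ht
    have ht0 : (t:ℂ) ≠ 0 := by exact_mod_cast ht.1.ne'
    have : v t - β * (t:ℂ) = (g t - β) * (t:ℂ) := by
      show v t - β * (t:ℂ) = (v t / (t:ℂ) - β) * (t:ℂ)
      rw [sub_mul, div_mul_cancel₀ _ ht0]
    rw [this, norm_mul, Complex.norm_real, Real.norm_of_nonneg ht.1.le]
    calc ‖g t - β‖ * t ≤ (C₁ * t ^ (b-1)) * t :=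
          mul_le_mul_of_nonneg_right (hβ t ht) ht.1.le
      _ = C₁ * t ^ b := by
          rw [mul_assoc]
          congr 1
          nth_rewrite 2 [← Real.rpow_one t]
          rw [← Real.rpow_add ht.1]
          congr 1
          ring
  -- Step 2: h = u/t - β log t
  set h : ℝ → ℂ := fun x => u x / (x : ℂ) - β * (Real.log x : ℂ) with hh
  have hhderiv : ∀ t ∈ Set.Ioc (0:ℝ) 1,
      HasDerivAt h ((v t - β * (t:ℂ)) / (t:ℂ)^2) t := by
    intro t ht
    have ht0 : (t:ℂ) ≠ 0 := by exact_mod_cast ht.1.ne'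
    have ht0' : t ≠ 0 := ht.1.ne'
    have hid : HasDerivAt (fun x : ℝ => (x:ℂ)) 1 t := by
      simpa using (hasDerivAt_id t).ofReal_comp
    have h1 : HasDerivAt (fun x : ℝ => u x / (x:ℂ))
        ((deriv u t * (t:ℂ) - u t * 1) / (t:ℂ)^2) t :=
      ((hu t ht).hasDerivAt).div hid ht0
    have h2 : HasDerivAt (fun x : ℝ => β * (Real.log x : ℂ)) (β * (t⁻¹ : ℝ)) t :=
      ((Real.hasDerivAt_log ht0').ofReal_comp).const_mul β
    have := h1.sub h2
    refine this.congr_deriv ?_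
    rw [hv t, Complex.ofReal_inv]
    field_simp
  have hhdiff : ∀ t ∈ Set.Ioc (0:ℝ) 1, DifferentiableAt ℝ h t :=
    fun t ht => (hhderiv t ht).differentiableAt
  have hhbd : ∀ t ∈ Set.Ioc (0:ℝ) 1, ‖deriv h t‖ ≤ C₁ * t ^ (b-2) := by
    intro t ht
    rw [(hhderiv t ht).deriv]
    rw [norm_div]
    have h2 : ‖(t:ℂ)^2‖ = t^(2:ℕ) := by
      rw [norm_pow, Complex.norm_real, Real.norm_of_nonneg ht.1.le]
    rw [h2, div_le_iff₀ (pow_pos ht.1 2)]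
    calc ‖v t - β * (t:ℂ)‖ ≤ C₁ * t ^ b := hvβ t ht
      _ = C₁ * t ^ (b-2) * t ^ (2:ℕ) := by
          rw [mul_assoc, ← Real.rpow_natCast t 2, ← Real.rpow_add ht.1]
          norm_num
  obtain ⟨β', hβ'⟩ := stmt3_decay hb hC₁0 hhdiff hhbd
  refine ⟨β, β', C₁/(b-1), div_nonneg hC₁0 hbpos.le, fun t ht => ?_⟩
  have ht0 : (t:ℂ) ≠ 0 := by exact_mod_cast ht.1.ne'
  have heq : u t - β * (t:ℂ) * (Real.log t : ℂ) - β' * (t:ℂ) = (h t - β') * (t:ℂ) := by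
    show u t - β * (t:ℂ) * (Real.log t : ℂ) - β' * (t:ℂ) = (u t / (t:ℂ) - β * (Real.log t : ℂ) - β') * (t:ℂ)
    rw [sub_mul, sub_mul, div_mul_cancel₀ _ ht0]
    ring
  rw [heq, norm_mul, Complex.norm_real, Real.norm_of_nonneg ht.1.le]
  calc ‖h t - β'‖ * t ≤ (C₁/(b-1) * t ^ (b-1)) * t :=
        mul_le_mul_of_nonneg_right (hβ' t ht) ht.1.le
    _ = C₁/(b-1) * t ^ b := by
        rw [mul_assoc]
        congr 1
        nth_rewrite 2 [← Real.rpow_one t]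
        rw [← Real.rpow_add ht.1]
        congr 1
        ring
end

section
/- Let a, b ∈ ℂ with a ≠ b, let m ∈ ℝ with m > max(Re a, Re b), and let C ≥ 0. Let u : ℝ → ℂ be differentiable at every point of (0,1], define v(t) = t·u′(t) − b·u(t), and assume v is differentiable at every point of (0,1] with ‖t·v′(t) − a·v(t)‖ ≤ C·t^m for all t ∈ (0,1]. Then there exist c₁, c₂ ∈ ℂ and C′ ≥ 0 such that ‖u(t) − c₁·(t:ℂ)^a − c₂·(t:ℂ)^b‖ ≤ C′·t^m for all t ∈ (0,1]. -/
open Set MeasureTheory intervalIntegral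

lemma hasDerivAt_cpow_real {t : ℝ} (ht : 0 < t) (c : ℂ) :
    HasDerivAt (fun s : ℝ => (s : ℂ) ^ c) (c * (t : ℂ) ^ c / t) t := by
  have h1 : HasDerivAt Real.log (1 / t) t := by
    simpa [one_div] using Real.hasDerivAt_log ht.ne'
  have h2 : HasDerivAt (fun s : ℝ => ((Real.log s : ℂ))) (((1 / t : ℝ) : ℂ)) t :=
    h1.ofReal_comp
  have h4 : HasDerivAt (fun s : ℝ => Complex.exp ((Real.log s : ℂ) * c))
      (Complex.exp ((Real.log t : ℂ) * c) * (((1 / t : ℝ) : ℂ) * c)) t :=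
    (h2.mul_const c).cexp
  have heq : (fun s : ℝ => Complex.exp ((Real.log s : ℂ) * c))
      =ᶠ[nhds t] (fun s : ℝ => (s : ℂ) ^ c) := by
    filter_upwards [eventually_gt_nhds ht] with s hs
    rw [Complex.cpow_def_of_ne_zero (by exact_mod_cast hs.ne'), Complex.ofReal_log hs.le]
  have h5 := h4.congr_of_eventuallyEq heq.symm
  have hpow : Complex.exp ((Real.log t : ℂ) * c) = (t : ℂ) ^ c := by
    rw [Complex.cpow_def_of_ne_zero (by exact_mod_cast ht.ne'), Complex.ofReal_log ht.le]
  rw [hpow] at h5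
  refine h5.congr_deriv ?_
  push_cast
  ring

lemma aux_single (a : ℂ) (m : ℝ) (hm : a.re < m) (C : ℝ) (hC : 0 ≤ C) (w : ℝ → ℂ)
    (hw : ∀ t ∈ Set.Ioc (0 : ℝ) 1, DifferentiableAt ℝ w t)
    (hb : ∀ t ∈ Set.Ioc (0 : ℝ) 1, ‖(t : ℂ) * deriv w t - a * w t‖ ≤ C * t ^ m) :
    ∃ (c : ℂ) (C' : ℝ), 0 ≤ C' ∧ ∀ t ∈ Set.Ioc (0 : ℝ) 1,
      ‖w t - c * (t : ℂ) ^ a‖ ≤ C' * t ^ m := by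
  set k : ℝ := m - a.re - 1 with hk
  have hk1 : -1 < k := by simp only [hk]; linarith
  have hk0 : 0 < k + 1 := by linarith
  set h : ℝ → ℂ := fun s => w s * (s : ℂ) ^ (-a) with hh
  -- derivative of h
  have hderiv : ∀ t ∈ Set.Ioc (0 : ℝ) 1, HasDerivAt h
      (((t : ℂ) * deriv w t - a * w t) * (t : ℂ) ^ (-a) / t) t := by
    intro t ht
    have htC : (t : ℂ) ≠ 0 := by exact_mod_cast ht.1.ne'
    have h1 := ((hw t ht).hasDerivAt).mul (hasDerivAt_cpow_real ht.1 (-a))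
    refine h1.congr_deriv ?_
    field_simp
    ring
  have hderiv' : ∀ t ∈ Set.Ioc (0 : ℝ) 1,
      deriv h t = ((t : ℂ) * deriv w t - a * w t) * (t : ℂ) ^ (-a) / t := fun t ht =>
    (hderiv t ht).deriv
  -- pointwise bound on deriv h
  have hbd : ∀ t ∈ Set.Ioc (0 : ℝ) 1, ‖deriv h t‖ ≤ C * t ^ k := by
    intro t ht
    rw [hderiv' t ht]
    have hnorm : ‖((t : ℂ) ^ (-a))‖ = t ^ (-a.re) := by
      rw [Complex.norm_cpow_eq_rpow_re_of_pos ht.1, Complex.neg_re]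
    rw [norm_div, norm_mul, hnorm, Complex.norm_real, Real.norm_of_nonneg ht.1.le]
    have hle : ‖(t : ℂ) * deriv w t - a * w t‖ * t ^ (-a.re) ≤ (C * t ^ m) * t ^ (-a.re) := by
      apply mul_le_mul_of_nonneg_right (hb t ht) (Real.rpow_nonneg ht.1.le _)
    calc ‖(t : ℂ) * deriv w t - a * w t‖ * t ^ (-a.re) / t
        ≤ (C * t ^ m) * t ^ (-a.re) / t := by
          exact div_le_div_of_nonneg_right hle ht.1.le
      _ = C * t ^ k := by
          rw [hk, show m - a.re - 1 = m + -a.re + -1 by ring, Real.rpow_add ht.1,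
            Real.rpow_add ht.1, Real.rpow_neg_one]
          field_simp
  -- integrability
  have hint : ∀ t ∈ Set.Icc (0 : ℝ) 1, IntervalIntegrable (deriv h) volume t 1 := by
    intro t ht
    rw [intervalIntegrable_iff, uIoc_of_le ht.2]
    have hgint : IntervalIntegrable (fun s : ℝ => C * s ^ k) volume t 1 :=
      (intervalIntegrable_rpow' hk1).const_mul C
    rw [intervalIntegrable_iff, uIoc_of_le ht.2] at hgint
    apply hgint.mono' ((aestronglyMeasurable_deriv h volume).restrict)
    rw [ae_restrict_iff' measurableSet_Ioc]
    filter_upwards with s hs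
    exact hbd s ⟨lt_of_le_of_lt ht.1 hs.1, hs.2⟩
  -- FTC
  have hftc : ∀ t ∈ Set.Ioc (0 : ℝ) 1,
      ∫ s in t..1, deriv h s = h 1 - h t := by
    intro t ht
    apply integral_eq_sub_of_hasDerivAt
    · intro s hs
      rw [Set.uIcc_of_le ht.2] at hs
      exact (hderiv s ⟨lt_of_lt_of_le ht.1 hs.1, hs.2⟩).differentiableAt.hasDerivAt
    · exact hint t ⟨ht.1.le, ht.2⟩
  set c0 : ℂ := h 1 - ∫ s in (0:ℝ)..1, deriv h s with hc0
  refine ⟨c0, C / (k + 1), div_nonneg hC hk0.le, ?_⟩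
  intro t ht
  have hint0t : IntervalIntegrable (deriv h) volume 0 t := by
    apply (hint 0 ⟨le_refl _, zero_le_one⟩).mono_set
    rw [Set.uIcc_of_le ht.1.le, Set.uIcc_of_le zero_le_one]
    exact Set.Icc_subset_Icc le_rfl ht.2
  have hsplit : (∫ s in (0:ℝ)..1, deriv h s)
      = (∫ s in (0:ℝ)..t, deriv h s) + ∫ s in t..1, deriv h s :=
    (integral_add_adjacent_intervals hint0t (hint t ⟨ht.1.le, ht.2⟩)).symm
  have hht : h t - c0 = ∫ s in (0:ℝ)..t, deriv h s := by
    rw [hc0, hsplit, hftc t ht]; ring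
  -- bound on ‖h t − c0‖
  have hbound2 : ‖h t - c0‖ ≤ C / (k + 1) * t ^ (k + 1) := by
    rw [hht]
    have h1 : ‖∫ s in (0:ℝ)..t, deriv h s‖ ≤ |∫ s in (0:ℝ)..t, C * s ^ k| := by
      apply intervalIntegral.norm_integral_le_abs_of_norm_le
      · rw [uIoc_of_le ht.1.le, ae_restrict_iff' measurableSet_Ioc]
        filter_upwards with s hs
        exact hbd s ⟨hs.1, hs.2.trans ht.2⟩
      · exact (intervalIntegrable_rpow' hk1).const_mul C
    rw [intervalIntegral.integral_const_mul, integral_rpow (Or.inl hk1)] at h1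
    rw [Real.zero_rpow hk0.ne', sub_zero] at h1
    calc ‖∫ s in (0:ℝ)..t, deriv h s‖ ≤ |C * (t ^ (k + 1) / (k + 1))| := h1
      _ = C / (k + 1) * t ^ (k + 1) := by
          rw [abs_of_nonneg (mul_nonneg hC
            (div_nonneg (Real.rpow_nonneg ht.1.le _) hk0.le))]
          ring
  -- transfer back to w
  have htC : (t : ℂ) ≠ 0 := by exact_mod_cast ht.1.ne'
  have hw' : h t * (t : ℂ) ^ a = w t := by
    show w t * (t : ℂ) ^ (-a) * (t : ℂ) ^ a = w t
    rw [mul_assoc, ← Complex.cpow_add _ _ htC]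
    simp
  have hwt : w t - c0 * (t : ℂ) ^ a = (h t - c0) * (t : ℂ) ^ a := by
    linear_combination -hw'
  rw [hwt, norm_mul]
  have hna : ‖((t : ℂ) ^ a)‖ = t ^ a.re := by
    rw [Complex.norm_cpow_eq_rpow_re_of_pos ht.1]
  rw [hna]
  calc ‖h t - c0‖ * t ^ a.re ≤ (C / (k + 1) * t ^ (k + 1)) * t ^ a.re :=
        mul_le_mul_of_nonneg_right hbound2 (Real.rpow_nonneg ht.1.le _)
    _ = C / (k + 1) * t ^ m := by
        rw [mul_assoc, ← Real.rpow_add ht.1]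
        congr 2
        simp only [hk]
        ring

/-- If `(t∂_t − a)(t∂_t − b)u = O(t^m)` on `(0,1]` with `a ≠ b` and
`m > max(Re a, Re b)`, then `u` splits as `c₁·t^a + c₂·t^b + O(t^m)`. -/
theorem stmt4 (a b : ℂ) (hab : a ≠ b) (m : ℝ) (hm : max a.re b.re < m)
    (C : ℝ) (hC : 0 ≤ C) (u : ℝ → ℂ)
    (hu : ∀ t ∈ Set.Ioc (0 : ℝ) 1, DifferentiableAt ℝ u t)
    (v : ℝ → ℂ) (hv : ∀ t : ℝ, v t = (t : ℂ) * deriv u t - b * u t)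
    (hvdiff : ∀ t ∈ Set.Ioc (0 : ℝ) 1, DifferentiableAt ℝ v t)
    (hbound : ∀ t ∈ Set.Ioc (0 : ℝ) 1,
      ‖(t : ℂ) * deriv v t - a * v t‖ ≤ C * t ^ m) :
    ∃ (c₁ c₂ : ℂ) (C' : ℝ), 0 ≤ C' ∧ ∀ t ∈ Set.Ioc (0 : ℝ) 1,
      ‖u t - c₁ * (t : ℂ) ^ a - c₂ * (t : ℂ) ^ b‖ ≤ C' * t ^ m := by
  have hma : a.re < m := lt_of_le_of_lt (le_max_left _ _) hm
  have hmb : b.re < m := lt_of_le_of_lt (le_max_right _ _) hm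
  obtain ⟨c, C₁, hC₁, h₁⟩ := aux_single a m hma C hC v hvdiff hbound
  set c₁ : ℂ := c / (a - b) with hc₁def
  have hab' : a - b ≠ 0 := sub_ne_zero.mpr hab
  have hc₁ : c₁ * (a - b) = c := div_mul_cancel₀ c hab'
  set u₁ : ℝ → ℂ := fun t => u t - c₁ * (t : ℂ) ^ a with hu₁
  have hderiv : ∀ t ∈ Set.Ioc (0 : ℝ) 1,
      HasDerivAt u₁ (deriv u t - c₁ * (a * (t : ℂ) ^ a / t)) t := fun t ht =>
    ((hu t ht).hasDerivAt).sub ((hasDerivAt_cpow_real ht.1 a).const_mul c₁)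
  have hu₁diff : ∀ t ∈ Set.Ioc (0 : ℝ) 1, DifferentiableAt ℝ u₁ t := fun t ht =>
    (hderiv t ht).differentiableAt
  have hu₁bound : ∀ t ∈ Set.Ioc (0 : ℝ) 1,
      ‖(t : ℂ) * deriv u₁ t - b * u₁ t‖ ≤ C₁ * t ^ m := by
    intro t ht
    have htC : (t : ℂ) ≠ 0 := by exact_mod_cast ht.1.ne'
    rw [(hderiv t ht).deriv]
    have key : (t : ℂ) * (deriv u t - c₁ * (a * (t : ℂ) ^ a / t))
        - b * (u t - c₁ * (t : ℂ) ^ a) = v t - c * (t : ℂ) ^ a := by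
      rw [hv t]
      have e0 : (t : ℂ) * (a * (t : ℂ) ^ a / t) = a * (t : ℂ) ^ a := by
        rw [mul_comm]; exact div_mul_cancel₀ _ htC
      linear_combination (-c₁) * e0 + (-(t : ℂ) ^ a) * hc₁
    rw [key]
    exact h₁ t ht
  obtain ⟨c₂, C₂, hC₂, h₂⟩ := aux_single b m hmb C₁ hC₁ u₁ hu₁diff hu₁bound
  exact ⟨c₁, c₂, C₂, hC₂, fun t ht => h₂ t ht⟩
end

section
/- Let n > 0 and 0 < α₀ ≤ α be real numbers, and let ζ ∈ ℂ with Re ζ > n/2. Set σ = n/2 + (n²/4 − (α₀²/α²)·ζ·(n − ζ))^{1/2}, using the principal square root. Then Re σ > n/2. -/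
/-- Principal square root of a nonzero complex number not on the negative real
axis has positive real part. -/
lemma sqrt_re_pos (z : ℂ) (hz : z ≠ 0) (harg : Complex.arg z ≠ Real.pi) :
    0 < (z ^ (1 / 2 : ℂ)).re := by
  rw [Complex.cpow_def_of_ne_zero hz, Complex.exp_re]
  apply mul_pos (Real.exp_pos _)
  have him : (Complex.log z * (1 / 2 : ℂ)).im = Complex.arg z / 2 := by
    simp [Complex.mul_im, Complex.log_im]
    ring
  rw [him]
  apply Real.cos_pos_of_mem_Ioo
  constructor
  · have := Complex.neg_pi_lt_arg z
    linarith
  · have := Complex.arg_le_pi z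
    have : Complex.arg z < Real.pi := lt_of_le_of_ne this harg
    linarith

/-- For the indicial root `σ = n/2 + √(n²/4 − (α₀²/α²)·ζ·(n − ζ))` (principal square
root), one has `Re σ > n/2` whenever `Re ζ > n/2`. -/
theorem stmt7 (n α₀ α : ℝ) (hn : 0 < n) (h0 : 0 < α₀) (h1 : α₀ ≤ α)
    (ζ : ℂ) (hζ : n / 2 < ζ.re) :
    n / 2 < ((n : ℂ) / 2 +
      ((n : ℂ) ^ 2 / 4 - ((α₀ : ℂ) ^ 2 / (α : ℂ) ^ 2) * ζ * ((n : ℂ) - ζ)) ^ (1 / 2 : ℂ)).re := by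
  set w : ℂ := (n : ℂ) ^ 2 / 4 - ((α₀ : ℂ) ^ 2 / (α : ℂ) ^ 2) * ζ * ((n : ℂ) - ζ) with hw
  set c : ℝ := α₀ ^ 2 / α ^ 2 with hc
  have hα : 0 < α := lt_of_lt_of_le h0 h1
  have hcpos : 0 < c := div_pos (pow_pos h0 2) (pow_pos hα 2)
  have hc1 : c ≤ 1 := by
    rw [div_le_one (pow_pos hα 2)]
    exact pow_le_pow_left₀ h0.le h1 2
  set x := ζ.re with hx
  set y := ζ.im with hy
  have hcoef : ((α₀ : ℂ) ^ 2 / (α : ℂ) ^ 2) = ((c : ℝ) : ℂ) := by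
    rw [hc]; push_cast; ring
  have hwre : w.re = n ^ 2 / 4 - c * (x * (n - x) + y ^ 2) := by
    rw [hw, hcoef]
    simp [Complex.sub_re, Complex.mul_re, Complex.mul_im, Complex.sub_im, ← Complex.ofReal_pow]
    ring
  have hwim : w.im = c * (y * (2 * x - n)) := by
    rw [hw, hcoef]
    simp [Complex.sub_re, Complex.mul_re, Complex.mul_im, Complex.sub_im, ← Complex.ofReal_pow]
    ring
  have key : w.im = 0 → 0 < w.re := by
    intro h
    rw [hwim] at h
    have hy0 : y = 0 := by
      rcases mul_eq_zero.mp h with h' | h'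
      · exact absurd h' (ne_of_gt hcpos)
      · rcases mul_eq_zero.mp h' with h'' | h''
        · exact h''
        · linarith
    rw [hwre, hy0]
    have hxn : x * (n - x) < n ^ 2 / 4 := by nlinarith
    rcases le_or_gt 0 (x * (n - x)) with h2 | h2
    · nlinarith
    · nlinarith
  have hwne : w ≠ 0 := by
    intro h
    have h1 : w.im = 0 := by rw [h]; simp
    have h2 : w.re = 0 := by rw [h]; simp
    linarith [key h1]
  have harg : Complex.arg w ≠ Real.pi := by
    intro h
    rw [Complex.arg_eq_pi_iff] at h
    linarith [key h.2]
  have := sqrt_re_pos w hwne harg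
  rw [Complex.add_re]
  simp only [Complex.div_re, Complex.natCast_re]
  simp [Complex.div_re]
  linarith
end

section
/- Let n ∈ ℕ, σ ∈ ℂ, and N ∈ ℕ with N ≥ 1, and assume n − 2σ − k ≠ 0 for every integer k with 1 ≤ k ≤ N. Let (Df)(x) = x·f′(x). Then for every family of coefficients c : {1,…,N} × {0,…,N} → ℂ there exists a family d : {1,…,N} × {0,…,N} → ℂ such that the functions v(x) = ∑_{k=1}^{N} ∑_{l=0}^{N} c_{k,l}·(x:ℂ)^{σ+k}·(log x)^l and u(x) = ∑_{k=1}^{N} ∑_{l=0}^{N} d_{k,l}·(x:ℂ)^{σ+k}·(log x)^l satisfy −(D(Du))(x) + n·(Du)(x) − σ·(n − σ)·u(x) = v(x) for all x > 0. -/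
/-- The radial b-derivative `D = x∂_x`. -/
noncomputable def Drad (f : ℝ → ℂ) : ℝ → ℂ := fun x => (x : ℂ) * deriv f x

/-- The finite sum `∑_{k=1}^{N} ∑_{l=0}^{N} a_{k,l}·x^{σ+k}·(log x)^l`. -/
noncomputable def logSum (σ : ℂ) (N : ℕ) (a : ℕ → ℕ → ℂ) : ℝ → ℂ :=
  fun x => ∑ k ∈ Finset.Icc 1 N, ∑ l ∈ Finset.range (N + 1),
    a k l * (x : ℂ) ^ (σ + (k : ℂ)) * (Real.log x : ℂ) ^ l

/-- Downward recursion solving the triangular system. -/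
noncomputable def solveCoef (lam bet : ℂ) (N : ℕ) (c : ℕ → ℂ) : ℕ → ℂ
  | l =>
    if _h : l ≤ N then
      (c l - bet * ((l : ℂ) + 1) * solveCoef lam bet N c (l + 1)
        + ((l : ℂ) + 1) * ((l : ℂ) + 2) * solveCoef lam bet N c (l + 2)) / lam
    else 0
  termination_by l => N + 1 - l
  decreasing_by all_goals omega

lemma solveCoef_gt (lam bet : ℂ) (N : ℕ) (c : ℕ → ℂ) {l : ℕ} (h : N < l) :
    solveCoef lam bet N c l = 0 := by
  rw [solveCoef]
  simp [Nat.not_le.2 h]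

lemma solveCoef_rec (lam bet : ℂ) (N : ℕ) (c : ℕ → ℂ) {l : ℕ} (h : l ≤ N)
    (hlam : lam ≠ 0) :
    lam * solveCoef lam bet N c l
      + bet * ((l : ℂ) + 1) * solveCoef lam bet N c (l + 1)
      - ((l : ℂ) + 1) * ((l : ℂ) + 2) * solveCoef lam bet N c (l + 2) = c l := by
  conv_lhs => rw [solveCoef]
  rw [dif_pos h]
  field_simp
  ring

/-- Index shift for the `l·t^{l-1}` part of the derivative. -/
lemma shift_sum (N : ℕ) (A : ℕ → ℂ) (hA : A (N + 1) = 0) (t : ℂ) :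
    ∑ l ∈ Finset.range (N + 1), (l : ℂ) * A l * t ^ (l - 1)
      = ∑ l ∈ Finset.range (N + 1), ((l : ℂ) + 1) * A (l + 1) * t ^ l := by
  rw [Finset.sum_range_succ' (fun l => (l : ℂ) * A l * t ^ (l - 1)) N]
  rw [Finset.sum_range_succ (fun l => ((l : ℂ) + 1) * A (l + 1) * t ^ l) N]
  simp [hA]

/-- Action of `Drad` on a `logSum` (coefficients vanish beyond `N`). -/
lemma Drad_logSum (σ : ℂ) (N : ℕ) (a : ℕ → ℕ → ℂ) (ha : ∀ k, a k (N + 1) = 0)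
    {x : ℝ} (hx : 0 < x) :
    Drad (logSum σ N a) x
      = logSum σ N (fun k l => (σ + (k : ℂ)) * a k l + ((l : ℂ) + 1) * a k (l + 1)) x := by
  have hX : (x : ℂ) ≠ 0 := by
    simpa using (Complex.ofReal_ne_zero.2 hx.ne')
  have hterm : ∀ (k l : ℕ), HasDerivAt
      (fun y : ℝ => a k l * (y : ℂ) ^ (σ + (k : ℂ)) * (Real.log y : ℂ) ^ l)
      ((a k l * ((σ + (k : ℂ)) * (x : ℂ) ^ (σ + (k : ℂ) - 1))) * (Real.log x : ℂ) ^ l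
        + (a k l * (x : ℂ) ^ (σ + (k : ℂ)))
            * ((l : ℂ) * (Real.log x : ℂ) ^ (l - 1) * (x : ℂ)⁻¹)) x := by
    intro k l
    have h1 : HasDerivAt (fun y : ℝ => (y : ℂ) ^ (σ + (k : ℂ)))
        ((σ + (k : ℂ)) * (x : ℂ) ^ (σ + (k : ℂ) - 1)) x :=
      ((Complex.hasStrictDerivAt_cpow_const
        (Complex.ofReal_mem_slitPlane.2 hx)).hasDerivAt).comp_ofReal
    have h2 : HasDerivAt (fun y : ℝ => ((Real.log y : ℂ)) ^ l)
        ((l : ℂ) * (Real.log x : ℂ) ^ (l - 1) * (x : ℂ)⁻¹) x := by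
      have h : HasDerivAt (fun y : ℝ => ((Real.log y : ℂ))) (((x⁻¹ : ℝ) : ℂ)) x :=
        (Real.hasDerivAt_log hx.ne').ofReal_comp
      have h2 := HasDerivAt.comp (h₂ := fun z : ℂ => z ^ l) x
        (hasDerivAt_pow l ((Real.log x : ℂ))) h
      simpa [Complex.ofReal_inv, Function.comp_def] using h2
    exact (h1.const_mul (a k l)).mul h2
  have hsum : HasDerivAt (logSum σ N a)
      (∑ k ∈ Finset.Icc 1 N, ∑ l ∈ Finset.range (N + 1),
        ((a k l * ((σ + (k : ℂ)) * (x : ℂ) ^ (σ + (k : ℂ) - 1))) * (Real.log x : ℂ) ^ l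
          + (a k l * (x : ℂ) ^ (σ + (k : ℂ)))
              * ((l : ℂ) * (Real.log x : ℂ) ^ (l - 1) * (x : ℂ)⁻¹))) x :=
    HasDerivAt.fun_sum fun k _ => HasDerivAt.fun_sum fun l _ => hterm k l
  have hD := hsum.deriv
  show (x : ℂ) * deriv (logSum σ N a) x = _
  rw [hD, Finset.mul_sum]
  unfold logSum
  refine Finset.sum_congr rfl fun k _ => ?_
  rw [Finset.mul_sum]
  set t := (Real.log x : ℂ) with ht
  set X := (x : ℂ) ^ (σ + (k : ℂ)) with hXdef
  have hxμ : (x : ℂ) * (x : ℂ) ^ (σ + (k : ℂ) - 1) = X := by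
    rw [Complex.cpow_sub _ _ hX, Complex.cpow_one, hXdef]
    field_simp
  have hxx : (x : ℂ) * (x : ℂ)⁻¹ = 1 := mul_inv_cancel₀ hX
  calc
    ∑ l ∈ Finset.range (N + 1), (x : ℂ) *
        ((a k l * ((σ + (k : ℂ)) * (x : ℂ) ^ (σ + (k : ℂ) - 1))) * t ^ l
          + (a k l * X) * ((l : ℂ) * t ^ (l - 1) * (x : ℂ)⁻¹))
      = ∑ l ∈ Finset.range (N + 1),
          ((σ + (k : ℂ)) * a k l * X * t ^ l + (l : ℂ) * (a k l * X) * t ^ (l - 1)) := by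
        refine Finset.sum_congr rfl fun l _ => ?_
        linear_combination ((σ + (k : ℂ)) * a k l * t ^ l) * hxμ
          + ((l : ℂ) * a k l * X * t ^ (l - 1)) * hxx
    _ = (∑ l ∈ Finset.range (N + 1), (σ + (k : ℂ)) * a k l * X * t ^ l)
          + ∑ l ∈ Finset.range (N + 1), (l : ℂ) * (a k l * X) * t ^ (l - 1) :=
        Finset.sum_add_distrib
    _ = (∑ l ∈ Finset.range (N + 1), (σ + (k : ℂ)) * a k l * X * t ^ l)
          + ∑ l ∈ Finset.range (N + 1), ((l : ℂ) + 1) * (a k (l + 1) * X) * t ^ l := by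
        rw [shift_sum N (fun l => a k l * X) (by simp [ha k]) t]
    _ = ∑ l ∈ Finset.range (N + 1),
          ((σ + (k : ℂ)) * a k l + ((l : ℂ) + 1) * a k (l + 1)) * X * t ^ l := by
        rw [← Finset.sum_add_distrib]
        exact Finset.sum_congr rfl fun l _ => by ring

/-- Solving away Taylor series at the boundary: provided `n − 2σ − k ≠ 0` for
`1 ≤ k ≤ N`, the operator `−D² + nD − σ(n−σ)` is surjective on the span of the
functions `x^{σ+k}(log x)^l`, `1 ≤ k ≤ N`, `0 ≤ l ≤ N`. -/
theorem stmt15 (n : ℕ) (σ : ℂ) (N : ℕ) (hN : 1 ≤ N)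
    (hσ : ∀ k : ℕ, 1 ≤ k → k ≤ N → (n : ℂ) - 2 * σ - (k : ℂ) ≠ 0) :
    ∀ c : ℕ → ℕ → ℂ, ∃ d : ℕ → ℕ → ℂ,
      ∀ x : ℝ, 0 < x →
        -(Drad (Drad (logSum σ N d))) x + (n : ℂ) * (Drad (logSum σ N d)) x
            - σ * ((n : ℂ) - σ) * logSum σ N d x =
          logSum σ N c x := by
  intro c
  set lam : ℕ → ℂ := fun k => (k : ℂ) * ((n : ℂ) - 2 * σ - (k : ℂ)) with hlam
  set bet : ℕ → ℂ := fun k => (n : ℂ) - 2 * σ - 2 * (k : ℂ) with hbet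
  refine ⟨fun k l => solveCoef (lam k) (bet k) N (c k) l, ?_⟩
  set d : ℕ → ℕ → ℂ := fun k l => solveCoef (lam k) (bet k) N (c k) l with hd
  have hd0 : ∀ k l, N < l → d k l = 0 := fun k l h => solveCoef_gt _ _ _ _ h
  set Dc : (ℕ → ℕ → ℂ) → ℕ → ℕ → ℂ :=
    fun a k l => (σ + (k : ℂ)) * a k l + ((l : ℂ) + 1) * a k (l + 1) with hDc
  have hDcd0 : ∀ k, Dc d k (N + 1) = 0 := by
    intro k
    simp [hDc, hd0 k (N + 1) (by omega), hd0 k (N + 2) (by omega)]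
  intro x hx
  have h1 : ∀ y : ℝ, 0 < y → Drad (logSum σ N d) y = logSum σ N (Dc d) y :=
    fun y hy => Drad_logSum σ N d (fun k => hd0 k (N + 1) (by omega)) hy
  have hev : Drad (logSum σ N d) =ᶠ[nhds x] logSum σ N (Dc d) := by
    filter_upwards [eventually_gt_nhds hx] with y hy using h1 y hy
  have h2 : Drad (Drad (logSum σ N d)) x = logSum σ N (Dc (Dc d)) x := by
    have hde : deriv (Drad (logSum σ N d)) x = deriv (logSum σ N (Dc d)) x :=
      hev.deriv_eq
    show (x : ℂ) * deriv (Drad (logSum σ N d)) x = _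
    rw [hde]
    exact Drad_logSum σ N (Dc d) hDcd0 hx
  rw [show -(Drad (Drad (logSum σ N d))) x = -(Drad (Drad (logSum σ N d)) x) from rfl]
  rw [h2, h1 x hx]
  -- now an identity of coefficient sums
  unfold logSum
  simp only [Finset.mul_sum, neg_mul, ← Finset.sum_neg_distrib]
  rw [← Finset.sum_add_distrib, ← Finset.sum_sub_distrib]
  refine Finset.sum_congr rfl fun k hk => ?_
  rw [← Finset.sum_add_distrib, ← Finset.sum_sub_distrib]
  refine Finset.sum_congr rfl fun l hl => ?_
  obtain ⟨hk1, hk2⟩ := Finset.mem_Icc.1 hk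
  have hlN : l ≤ N := by
    have := Finset.mem_range.1 hl; omega
  have hkc : (k : ℂ) ≠ 0 := Nat.cast_ne_zero.2 (by omega)
  have hlamne : lam k ≠ 0 := mul_ne_zero hkc (hσ k hk1 hk2)
  have hrec := solveCoef_rec (lam k) (bet k) N (c k) hlN hlamne
  simp only [hDc, hd]
  simp only [hlam, hbet] at hrec
  push_cast
  linear_combination ((x : ℂ) ^ (σ + (k : ℂ)) * (Real.log x : ℂ) ^ l) * hrec
end
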